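/- arXiv:1812.01682 — 3 statements merged into one kernel-verified Lean document; each statement's English description precedes it below -/
import Mathlib

section
/- The number of Fishburn permutations of size n avoiding the classical pattern 132 is 2^{n-1} for all n ≥ 1. -/
open Finset

/-- The list of values of a permutation of `Fin n` (0-based values). -/
def permList {n : ℕ} (π : Equiv.Perm (Fin n)) : List ℕ :=
  (List.finRange n).map fun i => (π i : ℕ)

/-- A sequence `w` of distinct integers contains the classical pattern `p`:
some subsequence of `w` is order-isomorphic to `p`. -/
def SeqContains (w p : List ℕ) : Prop :=
  ∃ f : Fin p.length → Fin w.length, StrictMono f ∧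
    ∀ i j : Fin p.length, p.get i < p.get j ↔ w.get (f i) < w.get (f j)

/-- A permutation avoids a classical pattern (given as the list of its values). -/
def AvoidsPat {n : ℕ} (π : Equiv.Perm (Fin n)) (p : List ℕ) : Prop :=
  ¬ SeqContains (permList π) p

/-- `π` is a Fishburn permutation: it avoids the bivincular pattern (231,{1},{1}),
i.e. there are no positions `i < k` with `π i = π k + 1` and `π i < π (i+1)`
(0-based values, so `π i = π k + 1` encodes `π(i) > 1` and `π(k) = π(i) - 1`). -/
def IsFishburn {n : ℕ} (π : Equiv.Perm (Fin n)) : Prop :=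
  ∀ i k : ℕ, ∀ hi : i < n, ∀ hk : k < n, ∀ _hik : i < k,
    (π ⟨i, hi⟩ : ℕ) = (π ⟨k, hk⟩ : ℕ) + 1 →
    ¬ ((π ⟨i, hi⟩ : ℕ) < (π ⟨i + 1, by omega⟩ : ℕ))

/-- A permutation is indecomposable if it is not the direct sum of two nonempty
permutations, i.e. no proper nonempty initial segment of positions maps onto the
corresponding initial segment of values. -/
def IsIndecomposable {n : ℕ} (π : Equiv.Perm (Fin n)) : Prop :=
  ¬ ∃ k : ℕ, 0 < k ∧ k < n ∧ ∀ i : Fin n, (i : ℕ) < k → (π i : ℕ) < k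

namespace FishAux

variable {n : ℕ}

/-- value at position `i`, with junk value `i` for `i ≥ n`. -/
def pv (π : Equiv.Perm (Fin n)) (i : ℕ) : ℕ :=
  if h : i < n then (π ⟨i, h⟩ : ℕ) else i

lemma pv_lt (π : Equiv.Perm (Fin n)) {i : ℕ} (h : i < n) : pv π i < n := by
  simp only [pv, dif_pos h]; exact (π ⟨i, h⟩).2

lemma pv_eq (π : Equiv.Perm (Fin n)) {i : ℕ} (h : i < n) : pv π i = (π ⟨i, h⟩ : ℕ) := by
  simp [pv, h]

lemma pv_inj (π : Equiv.Perm (Fin n)) {i j : ℕ} (h : pv π i = pv π j) : i = j := by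
  by_cases hi : i < n <;> by_cases hj : j < n
  · rw [pv_eq π hi, pv_eq π hj] at h
    have := π.injective (Fin.ext h)
    exact congrArg Fin.val this
  · have h1 := pv_lt π hi
    have h2 : pv π j = j := by simp [pv, hj]
    omega
  · have h1 := pv_lt π hj
    have h2 : pv π i = i := by simp [pv, hi]
    omega
  · have h1 : pv π i = i := by simp [pv, hi]
    have h2 : pv π j = j := by simp [pv, hj]
    omega

/-- Descents are down-closed. -/
def DesDown (π : Equiv.Perm (Fin n)) : Prop :=
  ∀ i j : ℕ, i < j → j + 1 < n → pv π (j+1) < pv π j → pv π (i+1) < pv π i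

lemma chain_asc (f : ℕ → ℕ) {a b : ℕ} (hab : a < b)
    (h : ∀ t, a ≤ t → t < b → f t < f (t+1)) : f a < f b := by
  induction b with
  | zero => omega
  | succ b ih =>
    rcases Nat.lt_or_ge a b with hb | hb
    · exact (ih hb (fun t ht ht' => h t ht (by omega))).trans (h b (by omega) (by omega))
    · have : a = b := by omega
      subst this; exact h a le_rfl (by omega)

lemma chain_desc (f : ℕ → ℕ) {a b : ℕ} (hab : a < b)
    (h : ∀ t, a ≤ t → t < b → f (t+1) < f t) : f b < f a := by
  induction b with
  | zero => omega
  | succ b ih =>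
    rcases Nat.lt_or_ge a b with hb | hb
    · exact (h b (by omega) (by omega)).trans (ih hb (fun t ht ht' => h t ht (by omega)))
    · have : a = b := by omega
      subst this; exact h a le_rfl (by omega)

end FishAux

namespace FishAux

variable {n : ℕ} {π : Equiv.Perm (Fin n)}

lemma pv_symm_zero (hn : 0 < n) : pv π ((π.symm ⟨0, hn⟩ : Fin n) : ℕ) = 0 := by
  have h : ((π.symm (⟨0, hn⟩ : Fin n)) : ℕ) < n := (π.symm ⟨0, hn⟩).2
  rw [pv_eq π h]
  have h2 : π (π.symm ⟨0, hn⟩) = ⟨0, hn⟩ := π.apply_symm_apply _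
  rw [show (⟨((π.symm (⟨0, hn⟩ : Fin n)) : ℕ), h⟩ : Fin n) = π.symm ⟨0, hn⟩ from Fin.ext rfl, h2]

section Struct
variable (hn : 0 < n)

/-- all positions before the position of value 0 are descents -/
lemma L1 (hP : DesDown π) {i : ℕ} (hi : i + 1 ≤ ((π.symm ⟨0, hn⟩ : Fin n) : ℕ)) :
    pv π (i+1) < pv π i := by
  set d := ((π.symm ⟨0, hn⟩ : Fin n) : ℕ) with hd
  have hdn : d < n := (π.symm ⟨0, hn⟩).2
  by_contra hcon
  have hne : pv π i ≠ pv π (i+1) := fun h => by have := pv_inj π h; omega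
  have hasc : pv π i < pv π (i+1) := by omega
  -- all t ≥ i are ascents
  have hall : ∀ t, i ≤ t → t < d → pv π t < pv π (t+1) := by
    intro t ht htd
    rcases Nat.eq_or_lt_of_le ht with h | h
    · subst h; exact hasc
    · by_contra hc
      have hne2 : pv π t ≠ pv π (t+1) := fun h => by have := pv_inj π h; omega
      have : pv π (t+1) < pv π t := by omega
      exact absurd (hP i t h (by omega) this) (by omega)
  have := chain_asc (pv π) (show i < d by omega) hall
  have h0 : pv π d = 0 := pv_symm_zero hn
  omega

lemma L2 (hP : DesDown π) {i : ℕ} (hi : ((π.symm ⟨0, hn⟩ : Fin n) : ℕ) ≤ i) (hi2 : i + 1 < n) :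
    pv π i < pv π (i+1) := by
  set d := ((π.symm ⟨0, hn⟩ : Fin n) : ℕ) with hd
  by_contra hcon
  have hne : pv π i ≠ pv π (i+1) := fun h => by have := pv_inj π h; omega
  have hdes : pv π (i+1) < pv π i := by omega
  have h0 : pv π d = 0 := pv_symm_zero hn
  rcases Nat.eq_or_lt_of_le hi with h | h
  · rw [← h] at hdes; omega
  · have hall : ∀ t, d ≤ t → t < i + 1 → pv π (t+1) < pv π t := by
      intro t ht hti
      rcases Nat.eq_or_lt_of_le (show t ≤ i by omega) with h2 | h2
      · subst h2; exact hdes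
      · exact hP t i h2 hi2 hdes
    have := chain_desc (pv π) (show d < i + 1 by omega) hall
    omega

/-- strictly decreasing up to d -/
lemma structA (hP : DesDown π) {a b : ℕ} (hab : a < b)
    (hb : b ≤ ((π.symm ⟨0, hn⟩ : Fin n) : ℕ)) :
    pv π b < pv π a :=
  chain_desc (pv π) hab (fun t ht ht' => L1 hn hP (by omega))

/-- strictly increasing from d on -/
lemma structB (hP : DesDown π) {a b : ℕ} (ha : ((π.symm ⟨0, hn⟩ : Fin n) : ℕ) ≤ a)
    (hab : a < b) (hb : b < n) : pv π a < pv π b :=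
  chain_asc (pv π) hab (fun t ht ht' => L2 hn hP (by omega) (by omega))

end Struct

lemma permList_length : (permList π).length = n := by simp [permList]

lemma permList_getElem (i : ℕ) (hi : i < (permList π).length) :
    (permList π)[i] = pv π i := by
  have h : i < n := by simpa [permList] using hi
  simp [permList, pv, h]

lemma permList_get (i : Fin (permList π).length) :
    (permList π).get i = pv π (i : ℕ) :=
  permList_getElem _ _

/-- building a 132 occurrence -/
lemma contains_of {a b c : ℕ} (hab : a < b) (hbc : b < c) (hc : c < n)
    (h1 : pv π a < pv π c) (h2 : pv π c < pv π b) :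
    SeqContains (permList π) [1, 3, 2] := by
  have hlen : (permList π).length = n := permList_length
  have hplen : ([1,3,2] : List ℕ).length = 3 := rfl
  refine ⟨fun i => Fin.cast hlen.symm (![⟨a, by omega⟩, ⟨b, by omega⟩, ⟨c, hc⟩] i), ?_, ?_⟩
  · intro i j hij
    fin_cases i <;> fin_cases j <;>
      simp_all [Fin.lt_def, Fin.ext_iff] <;> omega
  · intro i j
    have h3 : pv π a < pv π b := lt_trans h1 h2
    fin_cases i <;> fin_cases j <;>
      simp [List.get_eq_getElem, permList_getElem, Fin.cast] <;> omega

end FishAux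

namespace FishAux

variable {n : ℕ} {π : Equiv.Perm (Fin n)}

lemma fishburn_of_desDown (hn : 0 < n) (hP : DesDown π) : IsFishburn π := by
  intro i k hi hk hik heq hasc
  set d := ((π.symm ⟨0, hn⟩ : Fin n) : ℕ) with hd
  have hik1 : i + 1 < n := by omega
  have hasc' : pv π i < pv π (i+1) := by
    rw [pv_eq π hi, pv_eq π hik1]; exact hasc
  have heq' : pv π i = pv π k + 1 := by rw [pv_eq π hi, pv_eq π hk]; exact heq
  have hid : d ≤ i := by
    by_contra hcon
    have := L1 hn hP (show i + 1 ≤ d by omega)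
    omega
  have := structB hn hP (show d ≤ i by omega) hik hk
  omega

lemma avoids_of_desDown (hn : 0 < n) (hP : DesDown π) : AvoidsPat π [1, 3, 2] := by
  intro ⟨f, hmono, hiff⟩
  set d := ((π.symm ⟨0, hn⟩ : Fin n) : ℕ) with hd
  set a : ℕ := (f ⟨0, by norm_num⟩ : ℕ) with hA
  set b : ℕ := (f ⟨1, by norm_num⟩ : ℕ) with hB
  set c : ℕ := (f ⟨2, by norm_num⟩ : ℕ) with hC
  have hab : a < b := hmono (show (⟨0, by norm_num⟩ : Fin 3) < ⟨1, by norm_num⟩ by decide)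
  have hbc : b < c := hmono (show (⟨1, by norm_num⟩ : Fin 3) < ⟨2, by norm_num⟩ by decide)
  have hcn : c < n := by
    have h1 := (f ⟨2, by norm_num⟩).2
    have h2 : (permList π).length = n := permList_length
    omega
  have h1 : pv π a < pv π c := by
    have := (hiff ⟨0, by norm_num⟩ ⟨2, by norm_num⟩).mp (by norm_num)
    rwa [permList_get, permList_get] at this
  have h2 : pv π c < pv π b := by
    have := (hiff ⟨2, by norm_num⟩ ⟨1, by norm_num⟩).mp (by norm_num)
    rwa [permList_get, permList_get] at this
  -- b must be in the decreasing part
  have hbd : b < d := by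
    by_contra hcon
    have := structB hn hP (show d ≤ b by omega) hbc hcn
    omega
  have := structA hn hP hab (show b ≤ d by omega)
  omega

lemma desDown_of_fishburn_avoids (hn : 0 < n) (hF : IsFishburn π)
    (hA : AvoidsPat π [1, 3, 2]) : DesDown π := by
  classical
  intro i0 j0 hij0 hj0n hdes0
  by_contra hcon
  have hi0n : i0 + 1 < n := by omega
  have hasc0 : pv π i0 < pv π (i0 + 1) := by
    have hne : pv π i0 ≠ pv π (i0+1) := fun h => by have := pv_inj π h; omega
    omega
  -- minimal counterexample on the value at the ascent
  set Q : ℕ → Prop := fun v => ∃ i j, i < j ∧ j + 1 < n ∧ pv π i < pv π (i+1) ∧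
    pv π (j+1) < pv π j ∧ pv π i = v with hQ
  have hQ0 : Q (pv π i0) := ⟨i0, j0, hij0, hj0n, hasc0, hdes0, rfl⟩
  have hex : ∃ v, Q v := ⟨_, hQ0⟩
  obtain ⟨i, j', hij', hj'n, hasc, hdes', hival⟩ := Nat.find_spec hex
  have hmin : ∀ v, v < Nat.find hex → ¬ Q v := fun v hv => Nat.find_min hex hv
  -- least descent after i
  set R : ℕ → Prop := fun t => i < t ∧ t + 1 < n ∧ pv π (t+1) < pv π t with hR
  have hexR : ∃ t, R t := ⟨j', hij', hj'n, hdes'⟩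
  set j := Nat.find hexR with hj
  obtain ⟨hijR, hjn, hdes⟩ : R j := Nat.find_spec hexR
  have hin : i < n := by omega
  -- π increasing on [i, j]
  have hincr : ∀ t, i ≤ t → t < j → pv π t < pv π (t+1) := by
    intro t ht htj
    rcases Nat.eq_or_lt_of_le ht with h | h
    · subst h; exact hasc
    · have hnR : ¬ R t := Nat.find_min hexR htj
      have hne : pv π t ≠ pv π (t+1) := fun h2 => by have := pv_inj π h2; omega
      have : ¬ (pv π (t+1) < pv π t) := fun h2 => hnR ⟨h, by omega, h2⟩
      omega
  have hij_val : pv π i < pv π j := chain_asc (pv π) hijR hincr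
  -- 132 avoidance forces pv (j+1) < pv i
  have hj1 : pv π (j+1) < pv π i := by
    have hne : pv π (j+1) ≠ pv π i := fun h2 => by have := pv_inj π h2; omega
    by_contra hcon2
    exact hA (contains_of hijR (show j < j + 1 by omega) hjn (by omega) hdes)
  -- position of value (pv i - 1)
  have hpos : 1 ≤ pv π i := by omega
  have hvlt : pv π i - 1 < n := by have := pv_lt π hin; omega
  set k : ℕ := ((π.symm ⟨pv π i - 1, hvlt⟩ : Fin n) : ℕ) with hkdef
  have hkn : k < n := (π.symm ⟨pv π i - 1, hvlt⟩).2
  have hkval : pv π k = pv π i - 1 := by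
    rw [pv_eq π hkn]
    have : π (π.symm ⟨pv π i - 1, hvlt⟩) = ⟨pv π i - 1, hvlt⟩ := π.apply_symm_apply _
    rw [show (⟨k, hkn⟩ : Fin n) = π.symm ⟨pv π i - 1, hvlt⟩ from Fin.ext rfl, this]
  have hki : k ≠ i := fun h => by rw [h] at hkval; omega
  rcases Nat.lt_or_ge i k with hik | hik
  · -- Fishburn violation
    have hin1 : i + 1 < n := by omega
    have h1 : (π ⟨i, hin⟩ : ℕ) = (π ⟨k, hkn⟩ : ℕ) + 1 := by
      rw [← pv_eq π hin, ← pv_eq π hkn]; omega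
    apply hF i k hin hkn hik h1
    have h3 := hasc
    rw [pv_eq π hin, pv_eq π hin1] at h3
    exact h3
  · have hki' : k < i := by omega
    -- k must be a descent, else contradiction with minimality
    have hkdes : pv π (k+1) < pv π k := by
      by_contra hcon2
      have hne : pv π k ≠ pv π (k+1) := fun h2 => by have := pv_inj π h2; omega
      have hkasc : pv π k < pv π (k+1) := by omega
      have : Q (pv π k) := ⟨k, j, by omega, hjn, hkasc, hdes, rfl⟩
      exact hmin (pv π k) (by omega) this
    -- minimum of pv over [k+1, i]
    have hne2 : (Finset.Icc (k+1) i).Nonempty := ⟨i, by simp; omega⟩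
    obtain ⟨m, hmIcc, hmmin⟩ := Finset.exists_min_image (Finset.Icc (k+1) i) (pv π) hne2
    simp only [Finset.mem_Icc] at hmIcc
    have hm1 : pv π m ≤ pv π (k+1) := hmmin (k+1) (by simp; omega)
    have hmi : m ≠ i := fun h => by rw [h] at hm1; omega
    have hmasc : pv π m < pv π (m+1) := by
      have := hmmin (m+1) (by simp; omega)
      have hne3 : pv π m ≠ pv π (m+1) := fun h2 => by have := pv_inj π h2; omega
      omega
    have : Q (pv π m) := ⟨m, j, by omega, hjn, hmasc, hdes, rfl⟩
    exact hmin (pv π m) (by omega) this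

end FishAux

namespace FishAux

variable {n : ℕ}

def Svals (S : Finset (Fin (n-1))) : Finset (Fin n) :=
  S.image (fun v : Fin (n-1) => (⟨(v : ℕ) + 1, by have := v.2; omega⟩ : Fin n))

lemma emb_inj : Function.Injective (fun v : Fin (n-1) => (⟨(v : ℕ) + 1, by have := v.2; omega⟩ : Fin n)) := by
  intro a b h
  simp only [Fin.mk.injEq] at h
  exact Fin.ext (by omega)

lemma card_Svals (S : Finset (Fin (n-1))) : (Svals S).card = S.card :=
  Finset.card_image_of_injective _ emb_inj

lemma card_Svals_le (S : Finset (Fin (n-1))) : S.card ≤ n - 1 := by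
  have := Finset.card_le_univ S
  simpa using this

lemma card_compl_Svals (S : Finset (Fin (n-1))) : (Svals S)ᶜ.card = n - S.card := by
  rw [Finset.card_compl, card_Svals]; simp

lemma mem_Svals_pos (S : Finset (Fin (n-1))) {w : Fin n} (hw : w ∈ Svals S) : 1 ≤ (w : ℕ) := by
  simp only [Svals, Finset.mem_image] at hw
  obtain ⟨v, _, rfl⟩ := hw
  simp

def psiFun (S : Finset (Fin (n-1))) : Fin n → Fin n := fun i =>
  if h : (i : ℕ) < S.card then
    (Svals S).orderEmbOfFin (card_Svals S) ⟨S.card - 1 - (i : ℕ), by omega⟩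
  else ((Svals S)ᶜ).orderEmbOfFin (card_compl_Svals S) ⟨(i : ℕ) - S.card, by have := i.2; omega⟩

lemma psiFun_injective (S : Finset (Fin (n-1))) : Function.Injective (psiFun S) := by
  intro a b h
  unfold psiFun at h
  by_cases ha : (a : ℕ) < S.card <;> by_cases hb : (b : ℕ) < S.card
  · rw [dif_pos ha, dif_pos hb] at h
    have := (Finset.orderEmbOfFin (Svals S) (card_Svals S)).injective h
    simp only [Fin.mk.injEq] at this
    exact Fin.ext (by omega)
  · rw [dif_pos ha, dif_neg hb] at h
    have h1 := Finset.orderEmbOfFin_mem (Svals S) (card_Svals S) ⟨S.card - 1 - (a : ℕ), by omega⟩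
    have h2 := Finset.orderEmbOfFin_mem ((Svals S)ᶜ) (card_compl_Svals S) ⟨(b : ℕ) - S.card, by have := b.2; omega⟩
    rw [h] at h1
    exact absurd h1 (Finset.mem_compl.mp h2)
  · rw [dif_neg ha, dif_pos hb] at h
    have h1 := Finset.orderEmbOfFin_mem (Svals S) (card_Svals S) ⟨S.card - 1 - (b : ℕ), by omega⟩
    have h2 := Finset.orderEmbOfFin_mem ((Svals S)ᶜ) (card_compl_Svals S) ⟨(a : ℕ) - S.card, by have := a.2; omega⟩
    rw [← h] at h1
    exact absurd h1 (Finset.mem_compl.mp h2)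
  · rw [dif_neg ha, dif_neg hb] at h
    have := (Finset.orderEmbOfFin ((Svals S)ᶜ) (card_compl_Svals S)).injective h
    simp only [Fin.mk.injEq] at this
    exact Fin.ext (by omega)

noncomputable def Psi (S : Finset (Fin (n-1))) : Equiv.Perm (Fin n) :=
  Equiv.ofBijective (psiFun S) (Finite.injective_iff_bijective.mp (psiFun_injective S))

lemma Psi_apply (S : Finset (Fin (n-1))) (i : Fin n) : Psi S i = psiFun S i := rfl

lemma psiFun_card (S : Finset (Fin (n-1))) (hn : 0 < n) (hsn : S.card < n) :
    psiFun S ⟨S.card, hsn⟩ = ⟨0, hn⟩ := by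
  rw [psiFun, dif_neg (by simp)]
  have h0mem : (⟨0, hn⟩ : Fin n) ∈ (Svals S)ᶜ := by
    rw [Finset.mem_compl]
    intro hmem
    exact absurd (mem_Svals_pos S hmem) (by simp)
  have hz : 0 < n - S.card := by omega
  have hidx : (⟨(⟨S.card, hsn⟩ : Fin n).val - S.card, by omega⟩ : Fin (n - S.card)) = ⟨0, hz⟩ :=
    Fin.ext (by simp)
  rw [hidx, Finset.orderEmbOfFin_zero (card_compl_Svals S) hz]
  refine le_antisymm (Finset.min'_le _ _ h0mem) ?_
  exact Fin.mk_le_mk.mpr (Nat.zero_le _)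

lemma pv_Psi_lt (S : Finset (Fin (n-1))) {i : ℕ} (hi : i < n) (h : i < S.card) :
    pv (Psi S) i = ((Svals S).orderEmbOfFin (card_Svals S) ⟨S.card - 1 - i, by omega⟩ : ℕ) := by
  rw [pv_eq _ hi, Psi_apply, psiFun, dif_pos h]

lemma pv_Psi_ge (S : Finset (Fin (n-1))) {i : ℕ} (hi : i < n) (h : ¬ (i < S.card)) :
    pv (Psi S) i = (((Svals S)ᶜ).orderEmbOfFin (card_compl_Svals S) ⟨i - S.card, by omega⟩ : ℕ) := by
  rw [pv_eq _ hi, Psi_apply, psiFun, dif_neg h]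

lemma psi_desDown (S : Finset (Fin (n-1))) (hn : 0 < n) : DesDown (Psi S) := by
  have hsn : S.card < n := by have := card_Svals_le S; omega
  -- ascent at every position ≥ S.card
  have astep : ∀ t, S.card ≤ t → t + 1 < n → pv (Psi S) t < pv (Psi S) (t+1) := by
    intro t ht htn
    rw [pv_Psi_ge S (by omega) (by omega), pv_Psi_ge S htn (by omega)]
    have := (Finset.orderEmbOfFin ((Svals S)ᶜ) (card_compl_Svals S)).strictMono
      (show (⟨t - S.card, by omega⟩ : Fin (n - S.card)) < ⟨t + 1 - S.card, by omega⟩ by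
        rw [Fin.mk_lt_mk]; omega)
    exact this
  intro i j hij hjn hdes
  rcases Nat.lt_or_ge (i+1) S.card with h1 | h1
  · -- strictly inside the decreasing part
    rw [pv_Psi_lt S (i := i+1) (by omega) (by omega), pv_Psi_lt S (i := i) (by omega) (by omega)]
    have := (Finset.orderEmbOfFin (Svals S) (card_Svals S)).strictMono
      (show (⟨S.card - 1 - (i+1), by omega⟩ : Fin S.card) < ⟨S.card - 1 - i, by omega⟩ by
        rw [Fin.mk_lt_mk]; omega)
    exact this
  rcases Nat.eq_or_lt_of_le h1 with h2 | h2
  · -- junction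
    have hin : i < n := by omega
    rw [pv_Psi_lt S (i := i) hin (by omega)]
    have hval : pv (Psi S) (i+1) = 0 := by
      rw [pv_eq _ (show i + 1 < n by omega), Psi_apply]
      have : (⟨i+1, by omega⟩ : Fin n) = ⟨S.card, hsn⟩ := Fin.ext h2.symm
      rw [this, psiFun_card S hn hsn]
    rw [hval]
    have hmem := Finset.orderEmbOfFin_mem (Svals S) (card_Svals S) ⟨S.card - 1 - i, by omega⟩
    have := mem_Svals_pos S hmem
    omega
  · -- i ≥ S.card : then j is an ascent, contradiction
    exfalso
    have := astep j (by omega) hjn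
    omega

end FishAux

namespace FishAux

variable {n : ℕ}

lemma psi_mem_iff (S : Finset (Fin (n-1))) (i : Fin n) :
    Psi S i ∈ Svals S ↔ (i : ℕ) < S.card := by
  constructor
  · intro h
    by_contra hcon
    rw [Psi_apply, psiFun, dif_neg hcon] at h
    have h2 := Finset.orderEmbOfFin_mem ((Svals S)ᶜ) (card_compl_Svals S)
      ⟨(i : ℕ) - S.card, by have := i.2; omega⟩
    exact absurd h (Finset.mem_compl.mp h2)
  · intro h
    rw [Psi_apply, psiFun, dif_pos h]
    exact Finset.orderEmbOfFin_mem _ _ _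

lemma Psi_symm_zero (S : Finset (Fin (n-1))) (hn : 0 < n) :
    ((Psi S).symm ⟨0, hn⟩ : Fin n) = ⟨S.card, by have := card_Svals_le S; omega⟩ := by
  rw [Equiv.symm_apply_eq, Psi_apply, psiFun_card S hn]

lemma Psi_injective (hn : 0 < n) : Function.Injective (Psi (n := n)) := by
  intro S T h
  have hcard : S.card = T.card := by
    have h1 := Psi_symm_zero S hn
    have h2 := Psi_symm_zero T hn
    rw [h] at h1
    rw [h1] at h2
    have := congrArg Fin.val h2
    simpa using this
  ext v
  have hv1 : (v : ℕ) + 1 < n := by have := v.2; omega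
  have key : ∀ (U : Finset (Fin (n-1))), (v ∈ U ↔
      (((Psi U).symm ⟨(v : ℕ) + 1, hv1⟩ : Fin n) : ℕ) < U.card) := by
    intro U
    constructor
    · intro hmem
      rw [← psi_mem_iff U]
      have : Psi U ((Psi U).symm ⟨(v : ℕ) + 1, hv1⟩) = ⟨(v : ℕ) + 1, hv1⟩ :=
        (Psi U).apply_symm_apply _
      rw [this]
      exact Finset.mem_image_of_mem _ hmem
    · intro hlt
      have hmem : (⟨(v : ℕ) + 1, hv1⟩ : Fin n) ∈ Svals U := by
        rw [show (⟨(v : ℕ) + 1, hv1⟩ : Fin n) = Psi U ((Psi U).symm ⟨(v : ℕ) + 1, hv1⟩) from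
          ((Psi U).apply_symm_apply _).symm]
        exact (psi_mem_iff U _).mpr hlt
      simp only [Svals, Finset.mem_image] at hmem
      obtain ⟨w, hw, hwe⟩ := hmem
      have : w = v := by
        have := congrArg Fin.val hwe
        simp only at this
        exact Fin.ext (by omega)
      rwa [← this]
  rw [key S, key T, h, hcard]

lemma Psi_surjective (hn : 0 < n) {π : Equiv.Perm (Fin n)} (hP : DesDown π) :
    ∃ S : Finset (Fin (n-1)), Psi S = π := by
  classical
  set d := ((π.symm ⟨0, hn⟩ : Fin n) : ℕ) with hd
  have hdn : d < n := (π.symm ⟨0, hn⟩).2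
  refine ⟨Finset.univ.filter (fun v : Fin (n-1) =>
    ((π.symm ⟨(v : ℕ) + 1, by have := v.2; omega⟩ : Fin n) : ℕ) < d), ?_⟩
  set S := Finset.univ.filter (fun v : Fin (n-1) =>
    ((π.symm ⟨(v : ℕ) + 1, by have := v.2; omega⟩ : Fin n) : ℕ) < d) with hS
  -- Svals S is the set of values appearing before position d
  have hSvals : Svals S = Finset.univ.filter (fun w : Fin n => ((π.symm w : Fin n) : ℕ) < d) := by
    ext w
    simp only [Svals, Finset.mem_image, Finset.mem_filter, Finset.mem_univ, true_and, hS]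
    constructor
    · rintro ⟨v, hv, rfl⟩
      exact hv
    · intro hw
      have hw0 : (w : ℕ) ≠ 0 := by
        intro h0
        have : w = ⟨0, hn⟩ := Fin.ext h0
        rw [this] at hw
        omega
      refine ⟨⟨(w : ℕ) - 1, by have := w.2; omega⟩, ?_, ?_⟩
      · have : (⟨(w : ℕ) - 1 + 1, by have := w.2; omega⟩ : Fin n) = w := Fin.ext (by simp; omega)
        simpa [this] using hw
      · exact Fin.ext (by simp; omega)
  have hScard : S.card = d := by
    have h1 : (Svals S).card = d := by
      rw [hSvals]
      have : Finset.univ.filter (fun w : Fin n => ((π.symm w : Fin n) : ℕ) < d) =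
          (Finset.univ.filter (fun w : Fin n => (w : ℕ) < d)).image π := by
        ext w
        simp only [Finset.mem_filter, Finset.mem_univ, true_and, Finset.mem_image]
        constructor
        · intro hw
          exact ⟨π.symm w, hw, π.apply_symm_apply w⟩
        · rintro ⟨x, hx, rfl⟩
          rwa [π.symm_apply_apply]
      rw [this, Finset.card_image_of_injective _ π.injective]
      have : Finset.univ.filter (fun w : Fin n => (w : ℕ) < d) = Finset.Iio (⟨d, hdn⟩ : Fin n) := by
        ext w
        simp [Finset.mem_Iio, Fin.lt_def]
      rw [this, Fin.card_Iio]
    rw [← h1, card_Svals]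
  apply Equiv.ext
  intro i
  have hpv0 : pv π d = 0 := pv_symm_zero hn
  rcases Nat.lt_or_ge (i : ℕ) S.card with hi | hi
  · -- decreasing part
    have hg : (fun x : Fin S.card => π ⟨d - 1 - (x : ℕ), by omega⟩) =
        (Svals S).orderEmbOfFin (card_Svals S) := by
      apply Finset.orderEmbOfFin_unique
      · intro x
        rw [hSvals]
        simp only [Finset.mem_filter, Finset.mem_univ, true_and]
        rw [π.symm_apply_apply]
        have := x.2
        simp only
        omega
      · intro x y hxy
        have hx := x.2
        have hy := y.2
        have h1 : d - 1 - (y : ℕ) < d - 1 - (x : ℕ) := by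
          rw [Fin.lt_def] at hxy; omega
        have := structA hn hP h1 (show d - 1 - (x : ℕ) ≤ d by omega)
        rw [pv_eq π (show d - 1 - (x : ℕ) < n by omega),
          pv_eq π (show d - 1 - (y : ℕ) < n by omega)] at this
        rw [Fin.lt_def]
        exact this
    rw [Psi_apply, psiFun, dif_pos hi, ← hg]
    simp only
    congr 1
    apply Fin.ext
    simp only
    omega
  · -- increasing part
    have hg : (fun x : Fin (n - S.card) => π ⟨d + (x : ℕ), by have := x.2; omega⟩) =
        ((Svals S)ᶜ).orderEmbOfFin (card_compl_Svals S) := by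
      apply Finset.orderEmbOfFin_unique
      · intro x
        rw [Finset.mem_compl, hSvals]
        simp only [Finset.mem_filter, Finset.mem_univ, true_and]
        rw [π.symm_apply_apply]
        simp only
        omega
      · intro x y hxy
        have hx := x.2
        have hy := y.2
        have h1 : d + (x : ℕ) < d + (y : ℕ) := by rw [Fin.lt_def] at hxy; omega
        have := structB hn hP (show d ≤ d + (x : ℕ) by omega) h1 (by omega)
        rw [pv_eq π (show d + (x : ℕ) < n by omega),
          pv_eq π (show d + (y : ℕ) < n by omega)] at this
        rw [Fin.lt_def]
        exact this
    rw [Psi_apply, psiFun, dif_neg (by omega), ← hg]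
    simp only
    congr 1
    apply Fin.ext
    simp only
    have := i.2
    omega

end FishAux


open FishAux

theorem stmt1 (n : ℕ) (hn : 1 ≤ n) :
    Nat.card {π : Equiv.Perm (Fin n) // IsFishburn π ∧ AvoidsPat π [1, 3, 2]} =
      2 ^ (n - 1) := by
  have hn' : 0 < n := hn
  have hbij : Function.Bijective (fun S : Finset (Fin (n-1)) =>
      (⟨Psi S, fishburn_of_desDown hn' (psi_desDown S hn'),
        avoids_of_desDown hn' (psi_desDown S hn')⟩ :
        {π : Equiv.Perm (Fin n) // IsFishburn π ∧ AvoidsPat π [1, 3, 2]})) := by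
    constructor
    · intro S T h
      exact Psi_injective hn' (congrArg Subtype.val h)
    · rintro ⟨π, hF, hA⟩
      obtain ⟨S, hS⟩ := Psi_surjective hn' (desDown_of_fishburn_avoids hn' hF hA)
      exact ⟨S, Subtype.ext hS⟩
  rw [← Nat.card_eq_of_bijective _ hbij, Nat.card_eq_fintype_card, Fintype.card_finset,
    Fintype.card_fin]
end

section
/- The number of Fishburn permutations of size n avoiding the classical pattern 123 is 2^{n-1} for all n ≥ 1. -/
open Finset

lemma permList_length {n : ℕ} (π : Equiv.Perm (Fin n)) : (permList π).length = n := by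
  simp [permList]

lemma permList_get {n : ℕ} (π : Equiv.Perm (Fin n)) (q : Fin (permList π).length) :
    (permList π).get q = (π ⟨q.1, by have := q.2; simpa [permList] using this⟩ : ℕ) := by
  rw [List.get_eq_getElem]; simp [permList]

lemma permList_getElem {n : ℕ} (π : Equiv.Perm (Fin n)) (m : ℕ) (hm : m < n)
    (hm' : m < (permList π).length) :
    (permList π)[m]'hm' = (π ⟨m, hm⟩ : ℕ) := by
  have := permList_get π ⟨m, hm'⟩
  simpa [List.get_eq_getElem] using this

lemma no_ascent_desc (v : ℕ → ℕ) (x y : ℕ) (hxy : x ≤ y)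
    (h : ∀ i, x ≤ i → i < y → ¬ v i < v (i+1)) : v y ≤ v x := by
  induction y, hxy using Nat.le_induction with
  | base => exact le_rfl
  | succ y hy ih =>
      have h1 := h y hy (by omega)
      have h2 := ih (fun i hi h2 => h i hi (by omega))
      omega

lemma seqContains123' (w : List ℕ) (a b c : ℕ)
    (hab : a < b) (hbc : b < c) (hcn : c < w.length)
    (h1 : w[a]'(by omega) < w[b]'(by omega))
    (h2 : w[b]'(by omega) < w[c]'hcn) :
    SeqContains w [1, 2, 3] := by
  refine ⟨fun q => ⟨if q.1 = 0 then a else if q.1 = 1 then b else c, by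
    split
    · omega
    · split <;> omega⟩, ?_, ?_⟩
  · intro q r hqr
    simp only [Fin.lt_def] at hqr ⊢
    have hq3 : q.1 < 3 := q.2
    have hr3 : r.1 < 3 := r.2
    split_ifs <;> omega
  · intro q r
    have hq3 : q.1 < 3 := q.2
    have hr3 : r.1 < 3 := r.2
    simp only [List.get_eq_getElem]
    rcases (by omega : q.1 = 0 ∨ q.1 = 1 ∨ q.1 = 2) with h | h | h <;>
      rcases (by omega : r.1 = 0 ∨ r.1 = 1 ∨ r.1 = 2) with h' | h' | h' <;>
        simp only [h, h'] <;> norm_num <;> omega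

/-- every ascent bottom is 0 -/
def Qprop {n : ℕ} (π : Equiv.Perm (Fin n)) : Prop :=
  ∀ i : ℕ, ∀ h : i + 1 < n, (π ⟨i, by omega⟩ : ℕ) < (π ⟨i+1, h⟩ : ℕ) → (π ⟨i, by omega⟩ : ℕ) = 0

lemma char_lemma {n : ℕ} (π : Equiv.Perm (Fin n)) :
    (IsFishburn π ∧ AvoidsPat π [1, 2, 3]) ↔ Qprop π := by
  constructor
  · rintro ⟨hF, hA⟩ i h hasc
    by_contra h0
    set w : ℕ := (π ⟨i, by omega⟩ : ℕ) with hw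
    have hw1 : 1 ≤ w := by omega
    have hwn : w - 1 < n := by have := (π ⟨i, by omega⟩).2; omega
    set j : Fin n := π.symm ⟨w - 1, hwn⟩ with hj
    have hπj : (π j : ℕ) = w - 1 := by rw [hj, Equiv.apply_symm_apply]
    have hji : (j : ℕ) ≠ i := by
      intro he
      have : π j = π ⟨i, by omega⟩ := by congr 1; exact Fin.ext he
      rw [this] at hπj; omega
    rcases lt_or_gt_of_ne hji with hlt | hgt
    · -- j < i : pattern 123 at positions j, i, i+1
      apply hA
      have hlen : (permList π).length = n := permList_length π
      apply seqContains123' (permList π) j i (i+1) hlt (by omega) (by omega)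
      · rw [permList_getElem π j j.2, permList_getElem π i (by omega)]
        have : (⟨(j:ℕ), j.2⟩ : Fin n) = j := rfl
        rw [this, hπj]
        omega
      · rw [permList_getElem π i (by omega), permList_getElem π (i+1) h]
        exact hasc
    · exact hF i j (by omega) j.2 hgt (by rw [hπj]; omega) hasc
  · intro hQ
    constructor
    · intro i k hi hk hik heq hasc
      have := hQ i (by omega) hasc
      omega
    · rintro ⟨f, hf, hiff⟩
      have hlen : (permList π).length = n := permList_length π
      set v : ℕ → ℕ := fun m => if h : m < n then (π ⟨m, h⟩ : ℕ) else 0 with hv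
      have hvdef : ∀ (m : ℕ) (hm : m < n), v m = (π ⟨m, hm⟩ : ℕ) := by
        intro m hm; simp [hv, hm]
      have hval : ∀ q : Fin (permList π).length, (permList π).get q = v q := by
        intro q
        rw [permList_get, hvdef q.1 (by have := q.2; omega)]
      have q0 : Fin ([1,2,3] : List ℕ).length := ⟨0, by norm_num⟩
      -- use explicit indices
      set a0 : Fin ([1,2,3] : List ℕ).length := ⟨0, by norm_num⟩ with ha0
      set a1 : Fin ([1,2,3] : List ℕ).length := ⟨1, by norm_num⟩ with ha1
      set a2 : Fin ([1,2,3] : List ℕ).length := ⟨2, by norm_num⟩ with ha2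
      have h01 : f a0 < f a1 := hf (by rw [ha0, ha1]; exact Fin.mk_lt_mk.mpr (by omega))
      have h12 : f a1 < f a2 := hf (by rw [ha1, ha2]; exact Fin.mk_lt_mk.mpr (by omega))
      have hp01 : ([1,2,3] : List ℕ).get a0 < ([1,2,3] : List ℕ).get a1 := by
        rw [ha0, ha1]; norm_num
      have hp12 : ([1,2,3] : List ℕ).get a1 < ([1,2,3] : List ℕ).get a2 := by
        rw [ha1, ha2]; norm_num
      have hv01 : v (f a0) < v (f a1) := by
        have := (hiff a0 a1).1 hp01
        rwa [hval, hval] at this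
      have hv12 : v (f a1) < v (f a2) := by
        have := (hiff a1 a2).1 hp12
        rwa [hval, hval] at this
      have key : ∀ x y : ℕ, x < y → y < n → v x < v y →
          ∃ m, x ≤ m ∧ m < y ∧ v m < v (m+1) := by
        intro x y hxy hyn hvxy
        by_contra hc
        push_neg at hc
        have := no_ascent_desc v x y (by omega) (fun m hm1 hm2 => by
          have := hc m hm1 hm2; omega)
        omega
      have hfn : ∀ q, ((f q : ℕ)) < n := fun q => by have := (f q).2; omega
      obtain ⟨m1, hm1a, hm1b, hm1c⟩ := key (f a0) (f a1) h01 (hfn a1) hv01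
      obtain ⟨m2, hm2a, hm2b, hm2c⟩ := key (f a1) (f a2) h12 (hfn a2) hv12
      have hm1n : m1 + 1 < n := by have := hfn a1; omega
      have hm2n : m2 + 1 < n := by have := hfn a2; omega
      have e1 : (π ⟨m1, by omega⟩ : ℕ) = 0 := by
        apply hQ m1 hm1n
        rw [← hvdef m1 (by omega), ← hvdef (m1+1) hm1n]
        exact hm1c
      have e2 : (π ⟨m2, by omega⟩ : ℕ) = 0 := by
        apply hQ m2 hm2n
        rw [← hvdef m2 (by omega), ← hvdef (m2+1) hm2n]
        exact hm2c
      have hne : (⟨m1, by omega⟩ : Fin n) ≠ ⟨m2, by omega⟩ := by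
        intro he
        have := Fin.mk.injEq m1 _ m2 _ ▸ he
        omega
      apply hne
      apply π.injective
      exact Fin.ext (by omega)


section Construction
variable {n : ℕ}

/-- The canonical permutation associated to a finset: descending enumeration of `s`
followed by descending enumeration of `sᶜ`. -/
def Cfun (s : Finset (Fin n)) : Fin n → Fin n := fun i =>
  if h : (i : ℕ) < s.card then
    s.orderEmbOfFin rfl ⟨s.card - 1 - i, by omega⟩
  else
    sᶜ.orderEmbOfFin (by rw [card_compl, Fintype.card_fin]) ⟨n - 1 - i, by
      have := i.2; omega⟩

lemma Cfun_inj (s : Finset (Fin n)) : Function.Injective (Cfun s) := by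
  intro i j he
  unfold Cfun at he
  split_ifs at he with h1 h2 h2
  · have := (s.orderEmbOfFin rfl).injective he
    have := Fin.mk.injEq _ _ _ _ ▸ this
    apply Fin.ext
    omega
  · exfalso
    have hm1 := s.orderEmbOfFin_mem rfl ⟨s.card - 1 - i, by omega⟩
    have hm2 := sᶜ.orderEmbOfFin_mem (by rw [card_compl, Fintype.card_fin]) ⟨n - 1 - j, by
      have := j.2; omega⟩
    rw [he] at hm1
    rw [mem_compl] at hm2
    exact hm2 hm1
  · exfalso
    have hm1 := s.orderEmbOfFin_mem rfl ⟨s.card - 1 - j, by omega⟩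
    have hm2 := sᶜ.orderEmbOfFin_mem (by rw [card_compl, Fintype.card_fin]) ⟨n - 1 - i, by
      have := i.2; omega⟩
    rw [← he] at hm1
    rw [mem_compl] at hm2
    exact hm2 hm1
  · have := (sᶜ.orderEmbOfFin (by rw [card_compl, Fintype.card_fin])).injective he
    simp only [Fin.mk.injEq] at this
    have hi := i.2
    have hj := j.2
    apply Fin.ext
    omega

noncomputable def Cperm (s : Finset (Fin n)) : Equiv.Perm (Fin n) :=
  Equiv.ofBijective (Cfun s) (Finite.injective_iff_bijective.mp (Cfun_inj s))

lemma Cperm_apply (s : Finset (Fin n)) (i : Fin n) : Cperm s i = Cfun s i := rfl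

variable (hn : 0 < n) {s : Finset (Fin n)} (h0 : (⟨0, hn⟩ : Fin n) ∈ s)

include h0 in
lemma card_pos' : 0 < s.card := card_pos.mpr ⟨_, h0⟩

include hn h0 in
lemma Cperm_last_of_first : Cperm s ⟨s.card - 1, by have := card_pos' hn h0; have := card_finset_fin_le s; omega⟩ = ⟨0, hn⟩ := by
  have hk := card_pos' hn h0
  rw [Cperm_apply]
  unfold Cfun
  rw [dif_pos (show ((⟨s.card - 1, by have := card_finset_fin_le s; omega⟩ : Fin n) : ℕ) < s.card from Nat.sub_lt hk one_pos)]
  have hidx : (⟨s.card - 1 - (⟨s.card - 1, by have := card_finset_fin_le s; omega⟩ : Fin n).1, by omega⟩ : Fin s.card)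
      = ⟨0, hk⟩ := Fin.ext (by simp)
  rw [hidx, Finset.orderEmbOfFin_zero rfl hk]
  apply le_antisymm
  · exact min'_le s _ h0
  · exact le_min' _ _ _ (fun y _ => Fin.mk_le_mk.mpr (by omega))

include hn h0 in
lemma symm_Cperm_zero :
    ((Cperm s).symm ⟨0, hn⟩ : Fin n) = ⟨s.card - 1, by
      have := card_pos' hn h0; have := card_finset_fin_le s; omega⟩ := by
  rw [Equiv.symm_apply_eq]
  exact (Cperm_last_of_first hn h0).symm

lemma mem_Cperm_iff (s : Finset (Fin n)) (i : Fin n) :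
    Cperm s i ∈ s ↔ (i : ℕ) < s.card := by
  rw [Cperm_apply]
  unfold Cfun
  split_ifs with h
  · simp [h, Finset.orderEmbOfFin_mem]
  · simp only [h, iff_false]
    have hm := sᶜ.orderEmbOfFin_mem (by rw [card_compl, Fintype.card_fin]) ⟨n - 1 - i, by
      have := i.2; omega⟩
    rw [mem_compl] at hm
    exact hm

include hn h0 in
lemma Qprop_Cperm : ∀ i : ℕ, ∀ h : i + 1 < n,
    (Cperm s ⟨i, by omega⟩ : ℕ) < (Cperm s ⟨i+1, h⟩ : ℕ) → (Cperm s ⟨i, by omega⟩ : ℕ) = 0 := by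
  intro i h hasc
  have hk := card_pos' hn h0
  have hkn := card_finset_fin_le s
  by_cases h1 : i + 1 < s.card
  · exfalso
    rw [Cperm_apply, Cperm_apply] at hasc
    unfold Cfun at hasc
    rw [dif_pos (show ((⟨i, by omega⟩ : Fin n) : ℕ) < s.card by simpa using by omega),
      dif_pos (show ((⟨i+1, h⟩ : Fin n) : ℕ) < s.card by simpa using h1)] at hasc
    have hmono := (s.orderEmbOfFin (rfl : s.card = s.card)).strictMono
      (show (⟨s.card - 1 - ((⟨i+1, h⟩ : Fin n) : ℕ), by omega⟩ : Fin s.card) <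
        ⟨s.card - 1 - ((⟨i, by omega⟩ : Fin n) : ℕ), by omega⟩ from Fin.mk_lt_mk.mpr (by simp; omega))
    rw [Fin.lt_def] at hmono
    omega
  · by_cases h2 : i < s.card
    · -- i = s.card - 1
      have : (⟨i, by omega⟩ : Fin n) = ⟨s.card - 1, by omega⟩ := Fin.ext (by simp; omega)
      rw [this, Cperm_last_of_first hn h0]
    · exfalso
      rw [Cperm_apply, Cperm_apply] at hasc
      unfold Cfun at hasc
      rw [dif_neg (show ¬ ((⟨i, by omega⟩ : Fin n) : ℕ) < s.card by simpa using h2),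
        dif_neg (show ¬ ((⟨i+1, h⟩ : Fin n) : ℕ) < s.card by simpa using by omega)] at hasc
      have hmono := (sᶜ.orderEmbOfFin (show sᶜ.card = n - s.card by
          rw [card_compl, Fintype.card_fin])).strictMono
        (show (⟨n - 1 - ((⟨i+1, h⟩ : Fin n) : ℕ), by simp; omega⟩ : Fin (n - s.card)) <
          ⟨n - 1 - ((⟨i, by omega⟩ : Fin n) : ℕ), by simp; omega⟩ from Fin.mk_lt_mk.mpr (by simp; omega))
      rw [Fin.lt_def] at hmono
      omega

/-- The set of values appearing no later than value 0. -/
def Fmap (hn : 0 < n) (π : Equiv.Perm (Fin n)) : Finset (Fin n) :=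
  univ.filter fun w => π.symm w ≤ π.symm ⟨0, hn⟩

lemma zero_mem_Fmap (π : Equiv.Perm (Fin n)) : (⟨0, hn⟩ : Fin n) ∈ Fmap hn π := by
  simp [Fmap]

include h0 in
lemma Fmap_Cperm : Fmap hn (Cperm s) = s := by
  have hk := card_pos' hn h0
  have hkn := card_finset_fin_le s
  ext w
  obtain ⟨i, rfl⟩ : ∃ i, w = Cperm s i := ⟨(Cperm s).symm w, (Equiv.apply_symm_apply _ _).symm⟩
  rw [Fmap, mem_filter, and_iff_right (mem_univ _), Equiv.symm_apply_apply,
    symm_Cperm_zero hn h0, mem_Cperm_iff]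
  rw [Fin.le_def]
  simp
  omega

lemma strict_desc' (v : ℕ → ℕ) (x y : ℕ) (hxy : x < y)
    (h : ∀ i, x ≤ i → i < y → v (i+1) < v i) : v y < v x := by
  induction y, hxy using Nat.le_induction with
  | base => exact h x le_rfl (by omega)
  | succ y hy ih =>
      have h1 := h y (by omega) (by omega)
      have h2 := ih (fun i hi h2 => h i hi (by omega))
      omega

include hn in
lemma recon (π : Equiv.Perm (Fin n))
    (hQ : ∀ i : ℕ, ∀ h : i + 1 < n,
      (π ⟨i, by omega⟩ : ℕ) < (π ⟨i+1, h⟩ : ℕ) → (π ⟨i, by omega⟩ : ℕ) = 0) :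
    π = Cperm (Fmap hn π) := by
  set s := Fmap hn π with hs
  set p := ((π.symm ⟨0, hn⟩ : Fin n) : ℕ) with hp
  have hpn : p < n := (π.symm ⟨0, hn⟩).2
  have memA : ∀ i : ℕ, ∀ hi : i < n, (π ⟨i, hi⟩ ∈ s ↔ i ≤ p) := by
    intro i hi
    rw [hs, Fmap, mem_filter, and_iff_right (mem_univ _), Equiv.symm_apply_apply, Fin.le_def]
  have hne : ∀ i j : ℕ, ∀ hi : i < n, ∀ hj : j < n, i ≠ j →
      (π ⟨i, hi⟩ : ℕ) ≠ (π ⟨j, hj⟩ : ℕ) := by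
    intro i j hi hj hij he
    exact hij (by simpa using Fin.mk.injEq i hi j hj ▸ (π.injective (Fin.ext he)))
  set v : ℕ → ℕ := fun m => if h : m < n then (π ⟨m, h⟩ : ℕ) else 0 with hv
  have hvdef : ∀ (m : ℕ) (hm : m < n), v m = (π ⟨m, hm⟩ : ℕ) := by
    intro m hm; simp [hv, hm]
  have hB : ∀ i : ℕ, ∀ _hip : i + 1 ≤ p, (π ⟨i+1, by omega⟩ : ℕ) < (π ⟨i, by omega⟩ : ℕ) := by
    intro i hip
    have hi1 : i + 1 < n := by omega
    rcases lt_or_gt_of_ne (hne (i+1) i hi1 (by omega) (by omega)) with h | h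
    · exact h
    · exfalso
      have h0 := hQ i hi1 h
      have : (⟨i, by omega⟩ : Fin n) = π.symm ⟨0, hn⟩ := by
        rw [Equiv.eq_symm_apply]
        exact Fin.ext h0
      have := congrArg Fin.val this
      simp at this
      omega
  have hB' : ∀ i : ℕ, ∀ _hip : p + 1 ≤ i, ∀ hi1 : i + 1 < n,
      (π ⟨i+1, hi1⟩ : ℕ) < (π ⟨i, by omega⟩ : ℕ) := by
    intro i hip hi1
    rcases lt_or_gt_of_ne (hne (i+1) i hi1 (by omega) (by omega)) with h | h
    · exact h
    · exfalso
      have h0 := hQ i hi1 h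
      have : (⟨i, by omega⟩ : Fin n) = π.symm ⟨0, hn⟩ := by
        rw [Equiv.eq_symm_apply]
        exact Fin.ext h0
      have := congrArg Fin.val this
      simp at this
      omega
  have desc1 : ∀ x y : ℕ, x < y → y ≤ p → v y < v x := by
    intro x y hxy hyp
    exact strict_desc' v x y hxy (fun i hi h2 => by
      rw [hvdef i (by omega), hvdef (i+1) (by omega)]
      exact hB i (by omega))
  have desc2 : ∀ x y : ℕ, p < x → x < y → y < n → v y < v x := by
    intro x y hpx hxy hyn
    exact strict_desc' v x y hxy (fun i hi h2 => by
      rw [hvdef i (by omega), hvdef (i+1) (by omega)]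
      exact hB' i (by omega) (by omega))
  -- cardinality of s
  have hD : s.card = p + 1 := by
    have himg : s = (Iic (π.symm ⟨0, hn⟩)).image π := by
      ext w
      rw [hs, Fmap, mem_filter, and_iff_right (mem_univ _), mem_image]
      constructor
      · intro hw
        exact ⟨π.symm w, by rwa [mem_Iic], Equiv.apply_symm_apply _ _⟩
      · rintro ⟨j, hj, rfl⟩
        rwa [Equiv.symm_apply_apply, ← mem_Iic]
    rw [himg, card_image_of_injective _ π.injective, Fin.card_Iic]
  have hcompl : sᶜ.card = n - s.card := by rw [card_compl, Fintype.card_fin]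
  -- first block
  have hf : ∀ j : Fin s.card, (fun j : Fin s.card => π ⟨p - (j : ℕ), by omega⟩) j ∈ s := by
    intro j
    exact (memA (p - (j : ℕ)) (by omega)).mpr (by omega)
  have hfmono : StrictMono (fun j : Fin s.card => π ⟨p - (j : ℕ), by omega⟩) := by
    intro j j' hjj
    have hj : (j : ℕ) < s.card := j.2
    have hj' : (j' : ℕ) < s.card := j'.2
    rw [Fin.lt_def] at hjj ⊢
    have := desc1 (p - (j' : ℕ)) (p - (j : ℕ)) (by omega) (by omega)
    rwa [hvdef (p - (j:ℕ)) (by omega), hvdef (p - (j':ℕ)) (by omega)] at this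
  have funi := Finset.orderEmbOfFin_unique (rfl : s.card = s.card) hf hfmono
  -- second block
  have hg : ∀ j : Fin (n - s.card),
      (fun j : Fin (n - s.card) => π ⟨n - 1 - (j : ℕ), by omega⟩) j ∈ sᶜ := by
    intro j
    have hj : (j : ℕ) < n - s.card := j.2
    rw [mem_compl]
    intro hmem
    have := (memA (n - 1 - (j : ℕ)) (by omega)).mp hmem
    omega
  have hgmono : StrictMono (fun j : Fin (n - s.card) => π ⟨n - 1 - (j : ℕ), by omega⟩) := by
    intro j j' hjj
    have hj : (j : ℕ) < n - s.card := j.2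
    have hj' : (j' : ℕ) < n - s.card := j'.2
    rw [Fin.lt_def] at hjj ⊢
    have := desc2 (n - 1 - (j' : ℕ)) (n - 1 - (j : ℕ)) (by omega) (by omega) (by omega)
    rwa [hvdef (n - 1 - (j:ℕ)) (by omega), hvdef (n - 1 - (j':ℕ)) (by omega)] at this
  have guni := Finset.orderEmbOfFin_unique hcompl hg hgmono
  -- conclude
  apply Equiv.ext
  intro i
  rw [Cperm_apply]
  unfold Cfun
  split_ifs with h
  · have e1 : π i = (fun j : Fin s.card => π ⟨p - (j : ℕ), by omega⟩)
        ⟨s.card - 1 - (i : ℕ), by omega⟩ := by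
      simp only
      congr 1
      exact Fin.ext (by simp; omega)
    rw [e1, funi]
  · have hi := i.2
    have e1 : π i = (fun j : Fin (n - s.card) => π ⟨n - 1 - (j : ℕ), by omega⟩)
        ⟨n - 1 - (i : ℕ), by omega⟩ := by
      simp only
      congr 1
      exact Fin.ext (by simp; omega)
    rw [e1, guni]

end Construction


theorem stmt2 (n : ℕ) (hn : 1 ≤ n) :
    Nat.card {π : Equiv.Perm (Fin n) // IsFishburn π ∧ AvoidsPat π [1, 2, 3]} =
      2 ^ (n - 1) := by
  have hn' : 0 < n := hn
  have E1 : {π : Equiv.Perm (Fin n) // IsFishburn π ∧ AvoidsPat π [1, 2, 3]} ≃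
      {π : Equiv.Perm (Fin n) // Qprop π} :=
    Equiv.subtypeEquivRight (fun π => char_lemma π)
  have E2 : {π : Equiv.Perm (Fin n) // Qprop π} ≃
      {s : Finset (Fin n) // (⟨0, hn'⟩ : Fin n) ∈ s} :=
  { toFun := fun π => ⟨Fmap hn' π.1, zero_mem_Fmap hn' π.1⟩
    invFun := fun s => ⟨Cperm s.1, Qprop_Cperm hn' s.2⟩
    left_inv := fun π => Subtype.ext (recon hn' π.1 π.2).symm
    right_inv := fun s => Subtype.ext (Fmap_Cperm hn' s.2) }
  have E3 : {s : Finset (Fin n) // (⟨0, hn'⟩ : Fin n) ∈ s} ≃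
      Finset {x : Fin n // x ≠ ⟨0, hn'⟩} :=
  { toFun := fun s => (s.1.erase ⟨0, hn'⟩).subtype (· ≠ ⟨0, hn'⟩)
    invFun := fun t => ⟨insert ⟨0, hn'⟩
        (t.map ⟨Subtype.val, Subtype.val_injective⟩), mem_insert_self _ _⟩
    left_inv := by
      rintro ⟨s, hs⟩
      apply Subtype.ext
      ext x
      by_cases hx : x = ⟨0, hn'⟩
      · subst hx
        simp [hs]
      · simp [Finset.mem_subtype, Finset.mem_map, Finset.mem_erase, hx]
    right_inv := by
      intro t
      ext ⟨x, hx⟩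
      simp [Finset.mem_subtype, Finset.mem_map, Finset.mem_erase, hx] }
  rw [Nat.card_congr (E1.trans (E2.trans E3)), Nat.card_eq_fintype_card,
    Fintype.card_finset]
  congr 1
  rw [Fintype.card_subtype_compl, Fintype.card_subtype_eq, Fintype.card_fin]
end

section
/- Under the standard left-to-right-maxima bijection between 321-avoiding permutations of size n and Dyck paths of semilength n, a permutation π avoids the Fishburn bivincular pattern if and only if its corresponding Dyck path avoids the consecutive subpath UUDU. Consequently, the number of Fishburn permutations of size n avoiding 321 equals the number of Dyck paths of semilength n avoiding the subpath UUDU. -/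
open Finset

/-- A Dyck word of semilength `n`: `n` up-steps (`true`) and `n` down-steps
(`false`), every prefix having at least as many up-steps as down-steps. -/
def IsDyckWord (n : ℕ) (w : List Bool) : Prop :=
  w.length = 2 * n ∧ w.count true = n ∧
    ∀ p : List Bool, p <+: w → p.count false ≤ p.count true

/-- The Dyck path associated to a (321-avoiding) permutation via its
left-to-right maxima: at each position `j`, the path rises by the increase of
the running maximum of the (1-based) values and then takes one down-step. -/
def pathOf {n : ℕ} (π : Equiv.Perm (Fin n)) : List Bool :=
  (List.finRange n).flatMap fun j =>
    List.replicate
      (((π j : ℕ) + 1) -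
        ((Finset.univ.filter fun i => i < j).sup fun i => (π i : ℕ) + 1)) true
      ++ [false]

namespace Stmt8

def blk (a : ℕ) : List Bool := List.replicate a true ++ [false]

variable {n : ℕ}

/-- running max (+1) of the first `j` values of a permutation -/
def Nf (π : Equiv.Perm (Fin n)) (j : ℕ) : ℕ :=
  (Finset.univ.filter fun i : Fin n => (i : ℕ) < j).sup fun i => (π i : ℕ) + 1

/-- number of up-steps of the block at position `j` -/
def aval (π : Equiv.Perm (Fin n)) (j : Fin n) : ℕ := (π j : ℕ) + 1 - Nf π j

/-- block-size list of a permutation -/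
def asP (π : Equiv.Perm (Fin n)) : List ℕ := (List.finRange n).map (aval π)

/-- no decreasing subsequence of length 3 -/
def NoTri (π : Equiv.Perm (Fin n)) : Prop :=
  ∀ p q r : Fin n, p < q → q < r → (π q : ℕ) < (π p : ℕ) → (π r : ℕ) < (π q : ℕ) → False

lemma infix_cons_iff' {α} (p : List α) (x : α) (l : List α) :
    p <:+: x :: l ↔ p <+: x :: l ∨ p <:+: l := by
  constructor
  · rintro ⟨s, t, h⟩
    cases s with
    | nil => exact Or.inl ⟨t, by simpa using h⟩
    | cons a s =>
      right
      refine ⟨s, t, ?_⟩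
      simpa using congrArg List.tail h
  · rintro (⟨t, h⟩ | h)
    · exact ⟨[], t, by simpa using h⟩
    · exact h.trans (List.infix_cons (List.infix_refl l))

lemma prefix_TFT (a : ℕ) (X : List Bool) :
    [true, false, true] <+: (List.replicate a true ++ false :: X) ↔
      (a = 1 ∧ [true] <+: X) := by
  match a with
  | 0 => simp [List.cons_prefix_cons]
  | 1 => simp [List.cons_prefix_cons]
  | (a+2) => simp [List.replicate_succ, List.cons_prefix_cons]

lemma G_lemma (a : ℕ) (X : List Bool) :
    ([true, true, false, true] <:+: (List.replicate a true ++ false :: X)) ↔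
      ((2 ≤ a ∧ [true] <+: X) ∨ [true, true, false, true] <:+: X) := by
  induction a with
  | zero =>
    simp only [List.replicate_zero, List.nil_append]
    rw [infix_cons_iff']
    simp [List.cons_prefix_cons]
  | succ a ih =>
    rw [List.replicate_succ, List.cons_append, infix_cons_iff']
    rw [List.cons_prefix_cons]
    simp only [true_and]
    rw [prefix_TFT, ih]
    constructor
    · rintro ((⟨rfl, h⟩) | (⟨h2, h⟩ | h))
      · exact Or.inl ⟨by omega, h⟩
      · exact Or.inl ⟨by omega, h⟩
      · exact Or.inr h
    · rintro (⟨h2, h⟩ | h)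
      · rcases Nat.lt_or_ge a 2 with hlt | hge
        · exact Or.inl ⟨by omega, h⟩
        · exact Or.inr (Or.inl ⟨hge, h⟩)
      · exact Or.inr (Or.inr h)

lemma headT (as : List ℕ) :
    [true] <+: as.flatMap blk ↔ 1 ≤ as.getD 0 0 := by
  cases as with
  | nil => simp
  | cons a rest =>
    cases a with
    | zero => simp [blk, List.cons_prefix_cons]
    | succ a => simp [blk, List.replicate_succ, List.cons_prefix_cons]

lemma infix_flatMap_blk (as : List ℕ) :
    [true, true, false, true] <:+: as.flatMap blk ↔
      ∃ i, i + 1 < as.length ∧ 2 ≤ as.getD i 0 ∧ 1 ≤ as.getD (i + 1) 0 := by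
  induction as with
  | nil => simp
  | cons a rest ih =>
    have hb : (a :: rest).flatMap blk = List.replicate a true ++ false :: rest.flatMap blk := by
      simp [blk]
    rw [hb, G_lemma, headT, ih]
    constructor
    · rintro (⟨h2, h1⟩ | ⟨i, hi, h2, h1⟩)
      · refine ⟨0, ?_, by simpa using h2, by simpa using h1⟩
        cases rest with
        | nil => simp at h1
        | cons b r => simp
      · exact ⟨i + 1, by simpa using Nat.succ_lt_succ hi, by simpa using h2, by simpa using h1⟩
    · rintro ⟨i, hi, h2, h1⟩
      cases i with
      | zero => exact Or.inl ⟨by simpa using h2, by simpa using h1⟩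
      | succ i => exact Or.inr ⟨i, by simpa using Nat.lt_of_succ_lt_succ hi, by simpa using h2, by simpa using h1⟩

lemma count_tf (l : List Bool) : l.count true + l.count false = l.length := by
  induction l with
  | nil => simp
  | cons x l ih => cases x <;> simp [List.count_cons] <;> omega

lemma blk_count_true (a : ℕ) : (blk a).count true = a := by simp [blk]
lemma blk_count_false (a : ℕ) : (blk a).count false = 1 := by simp [blk, List.count_replicate]
lemma blk_length (a : ℕ) : (blk a).length = a + 1 := by simp [blk]

lemma flatMap_count_true (as : List ℕ) : (as.flatMap blk).count true = as.sum := by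
  induction as with
  | nil => simp
  | cons a rest ih => simp [List.count_append, blk_count_true, ih]

lemma flatMap_count_false (as : List ℕ) : (as.flatMap blk).count false = as.length := by
  induction as with
  | nil => simp
  | cons a rest ih => simp [List.count_append, blk_count_false, ih]; omega

lemma take_sum_cons (a : ℕ) (l : List ℕ) (j : ℕ) :
    ((a :: l).take (j + 1)).sum = a + (l.take j).sum := by
  simp [List.take_succ_cons]

/-- key prefix-count estimate for concatenations of blocks -/
lemma prefix_count (as : List ℕ) (c : ℕ)
    (h : ∀ j ≤ as.length, j ≤ c + (as.take j).sum) :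
    ∀ p, p <+: as.flatMap blk → p.count false ≤ c + p.count true := by
  induction as generalizing c with
  | nil =>
    intro p hp
    have : p = [] := List.prefix_nil.mp (by simpa using hp)
    simp [this]
  | cons a rest ih =>
    intro p hp
    have hca : 1 ≤ c + a := by
      have := h 1 (by simp)
      simpa [take_sum_cons] using this
    have hflat : (a :: rest).flatMap blk = blk a ++ rest.flatMap blk := by simp
    rw [hflat] at hp
    have hpeq : p = (blk a ++ rest.flatMap blk).take p.length := by
      rw [List.prefix_iff_eq_take] at hp; exact hp
    rcases le_or_gt p.length (a + 1) with hle | hgt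
    · -- p is a prefix of blk a
      have hpb : p <+: blk a := by
        rw [hpeq, List.take_append]
        have : (rest.flatMap blk).take (p.length - (blk a).length) = [] := by
          rw [blk_length]
          rcases Nat.lt_or_ge p.length (a+1) with h' | h'
          · simp [Nat.sub_eq_zero_of_le (le_of_lt h')]
          · have : p.length - (a+1) = 0 := by omega
            simp [this]
        rw [this, List.append_nil]
        exact List.take_prefix _ _
      have hcf : p.count false ≤ 1 := by
        have := hpb.sublist.count_le false
        simpa [blk_count_false] using this
      rcases Nat.eq_zero_or_pos (p.count false) with h0 | h1
      · omega
      · -- p must be all of blk a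
        have hlen : p.length = a + 1 := by
          by_contra hne
          have hlt : p.length ≤ a := by omega
          have hpr : p <+: List.replicate a true := by
            have : p = (List.replicate a true ++ [false]).take p.length := by
              rw [hpeq, List.take_append]
              have h2 : p.length - (blk a).length = 0 := by rw [blk_length]; omega
              rw [h2]
              simp [blk, List.take_append,
                Nat.sub_eq_zero_of_le hlt]
            rw [this, List.take_append, Nat.sub_eq_zero_of_le (by simpa using hlt)]
            simpa using List.take_prefix p.length (List.replicate a true)
          have := hpr.sublist.count_le false
          simp [List.count_replicate] at this
          omega
        have hpa : p = blk a := by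
          rw [hpeq, List.take_append, hlen]
          simp [blk_length]
        rw [hpa, blk_count_true, blk_count_false]
        omega
    · -- p = blk a ++ p' with p' prefix of the rest
      set p' := (rest.flatMap blk).take (p.length - (a + 1)) with hp'
      have hpsplit : p = blk a ++ p' := by
        rw [hpeq, List.take_append, List.take_of_length_le (by rw [blk_length]; omega),
          blk_length]
      have hp'pre : p' <+: rest.flatMap blk := List.take_prefix _ _
      have ihh : ∀ j ≤ rest.length, j ≤ (c + a - 1) + (rest.take j).sum := by
        intro j hj
        have := h (j + 1) (by simpa using Nat.succ_le_succ hj)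
        rw [take_sum_cons] at this
        omega
      have := ih (c + a - 1) ihh p' hp'pre
      rw [hpsplit]
      simp only [List.count_append, blk_count_true, blk_count_false]
      omega

lemma pathOf_eq (π : Equiv.Perm (Fin n)) : pathOf π = (asP π).flatMap blk := by
  unfold asP
  rw [pathOf, List.flatMap_map]
  apply List.flatMap_congr
  intro j _
  simp only [blk, aval, Nf]
  congr 3

lemma Nf_zero (π : Equiv.Perm (Fin n)) : Nf π 0 = 0 := by
  simp [Nf]

lemma le_Nf (π : Equiv.Perm (Fin n)) {j : ℕ} {i : Fin n} (h : (i : ℕ) < j) :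
    (π i : ℕ) + 1 ≤ Nf π j :=
  Finset.le_sup (f := fun i : Fin n => (π i : ℕ) + 1) (by simp [h])

lemma Nf_le (π : Equiv.Perm (Fin n)) {j c : ℕ}
    (h : ∀ i : Fin n, (i : ℕ) < j → (π i : ℕ) + 1 ≤ c) : Nf π j ≤ c :=
  Finset.sup_le (by intro i hi; exact h i (by simpa using hi))

lemma Nf_succ (π : Equiv.Perm (Fin n)) {j : ℕ} (hj : j < n) :
    Nf π (j + 1) = max (Nf π j) ((π ⟨j, hj⟩ : ℕ) + 1) := by
  rw [Nf, Nf]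
  have : (Finset.univ.filter fun i : Fin n => (i : ℕ) < j + 1) =
      insert (⟨j, hj⟩ : Fin n) (Finset.univ.filter fun i : Fin n => (i : ℕ) < j) := by
    ext i
    simp only [Finset.mem_filter, Finset.mem_insert, Finset.mem_univ, true_and, Fin.ext_iff]
    omega
  rw [this, Finset.sup_insert]
  omega

lemma Nf_mono (π : Equiv.Perm (Fin n)) {j k : ℕ} (h : j ≤ k) : Nf π j ≤ Nf π k :=
  Finset.sup_le fun i hi => le_Nf π (lt_of_lt_of_le (by simpa using hi) h)

lemma Nf_add_aval (π : Equiv.Perm (Fin n)) {j : ℕ} (hj : j < n) :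
    Nf π (j + 1) = Nf π j + aval π ⟨j, hj⟩ := by
  have hc : Nf π ((⟨j, hj⟩ : Fin n) : ℕ) = Nf π j := rfl
  rw [Nf_succ π hj, aval, hc]
  have := le_Nf π (i := (⟨j, hj⟩ : Fin n)) (j := j + 1) (by simp)
  rw [Nf_succ π hj] at this
  omega

lemma Nf_full (π : Equiv.Perm (Fin n)) : Nf π n = n := by
  apply le_antisymm
  · exact Nf_le π fun i _ => by omega
  · rcases Nat.eq_zero_or_pos n with rfl | hn
    · simp
    · have h := le_Nf π (i := π.symm ⟨n - 1, by omega⟩) (j := n) (Fin.is_lt _)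
      simpa [Nat.sub_add_cancel hn] using h

lemma card_filter_lt {j : ℕ} (hj : j ≤ n) :
    ((Finset.univ : Finset (Fin n)).filter fun i : Fin n => (i : ℕ) < j).card = j := by
  induction j with
  | zero => simp
  | succ j ih =>
    have hjn : j < n := hj
    have heq : (Finset.univ.filter fun i : Fin n => (i : ℕ) < j + 1) =
        insert (⟨j, hjn⟩ : Fin n) (Finset.univ.filter fun i : Fin n => (i : ℕ) < j) := by
      ext i
      simp only [Finset.mem_filter, Finset.mem_insert, Finset.mem_univ, true_and, Fin.ext_iff]
      omega
    rw [heq, Finset.card_insert_of_notMem (by simp), ih (by omega)]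

lemma le_Nf_self (π : Equiv.Perm (Fin n)) {j : ℕ} (hj : j ≤ n) : j ≤ Nf π j := by
  classical
  have hinj : Function.Injective fun i : Fin n => (π i : ℕ) :=
    fun a b hab => π.injective (Fin.ext hab)
  have hsub : ((Finset.univ : Finset (Fin n)).filter fun i : Fin n => (i : ℕ) < j).image
      (fun i => (π i : ℕ)) ⊆ Finset.range (Nf π j) := by
    intro u hu
    simp only [Finset.mem_image, Finset.mem_filter] at hu
    obtain ⟨i, ⟨_, hi⟩, rfl⟩ := hu
    simp only [Finset.mem_range]
    have := le_Nf π hi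
    omega
  have := Finset.card_le_card hsub
  rwa [Finset.card_image_of_injective _ hinj, card_filter_lt hj, Finset.card_range] at this

@[simp] lemma asP_length (π : Equiv.Perm (Fin n)) : (asP π).length = n := by simp [asP]

lemma asP_getElem (π : Equiv.Perm (Fin n)) {j : ℕ} (hj : j < n) :
    (asP π)[j]'(by simpa using hj) = aval π ⟨j, hj⟩ := by
  simp [asP]

lemma asP_getD (π : Equiv.Perm (Fin n)) {j : ℕ} (hj : j < n) :
    (asP π).getD j 0 = aval π ⟨j, hj⟩ := by
  rw [List.getD_eq_getElem _ _ (by simpa using hj), asP_getElem π hj]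

lemma sum_take_asP (π : Equiv.Perm (Fin n)) : ∀ j ≤ n, ((asP π).take j).sum = Nf π j := by
  intro j hj
  induction j with
  | zero => simp [Nf_zero]
  | succ j ih =>
    have hjn : j < n := hj
    rw [List.take_succ, List.sum_append,
      List.getElem?_eq_getElem (by simpa using hjn), ih (by omega)]
    simp [asP_getElem π hjn, Nf_add_aval π hjn]

lemma sum_asP (π : Equiv.Perm (Fin n)) : (asP π).sum = n := by
  have h := sum_take_asP π n le_rfl
  rw [List.take_of_length_le (by simp)] at h
  rw [h, Nf_full]

lemma pathOf_isDyckWord (π : Equiv.Perm (Fin n)) : IsDyckWord n (pathOf π) := by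
  rw [pathOf_eq]
  have hct : ((asP π).flatMap blk).count true = n := by rw [flatMap_count_true, sum_asP]
  have hcf : ((asP π).flatMap blk).count false = n := by rw [flatMap_count_false, asP_length]
  refine ⟨?_, hct, ?_⟩
  · have := count_tf ((asP π).flatMap blk)
    omega
  · intro p hp
    have := prefix_count (asP π) 0 ?_ p hp
    · simpa using this
    · intro j hj
      rw [sum_take_asP π j (by simpa using hj)]
      simpa using le_Nf_self π (j := j) (by simpa using hj)

@[simp] lemma permList_length (π : Equiv.Perm (Fin n)) : (permList π).length = n := by
  simp [permList]

lemma permList_get (π : Equiv.Perm (Fin n)) (k : Fin (permList π).length) :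
    (permList π).get k = (π ⟨k.1, by simpa using k.2⟩ : ℕ) := by
  rw [List.get_eq_getElem]; simp [permList]

lemma seqContains_iff (π : Equiv.Perm (Fin n)) :
    SeqContains (permList π) [3, 2, 1] ↔
      ∃ p q r : Fin n, p < q ∧ q < r ∧ (π q : ℕ) < (π p : ℕ) ∧ (π r : ℕ) < (π q : ℕ) := by
  constructor
  · rintro ⟨f, hmono, hiff⟩
    set i0 : Fin ([3,2,1] : List ℕ).length := ⟨0, by norm_num⟩
    set i1 : Fin ([3,2,1] : List ℕ).length := ⟨1, by norm_num⟩
    set i2 : Fin ([3,2,1] : List ℕ).length := ⟨2, by norm_num⟩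
    refine ⟨⟨(f i0).1, by simpa using (f i0).2⟩, ⟨(f i1).1, by simpa using (f i1).2⟩,
      ⟨(f i2).1, by simpa using (f i2).2⟩, ?_, ?_, ?_, ?_⟩
    · exact hmono (show i0 < i1 by simp [i0, i1, Fin.lt_def])
    · exact hmono (show i1 < i2 by simp [i1, i2, Fin.lt_def])
    · have h := (hiff i1 i0).mp (by norm_num [i0, i1])
      rw [permList_get, permList_get] at h
      exact h
    · have h := (hiff i2 i1).mp (by norm_num [i1, i2])
      rw [permList_get, permList_get] at h
      exact h
  · rintro ⟨p, q, r, hpq, hqr, hv1, hv2⟩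
    have hlen : n = (permList π).length := by simp
    refine ⟨fun i => ⟨(![p, q, r] i).1, by rw [← hlen]; exact (![p, q, r] i).2⟩, ?_, ?_⟩
    · intro i j hij
      have h1 : (p : ℕ) < q := hpq
      have h2 : (q : ℕ) < r := hqr
      fin_cases i <;> fin_cases j <;>
        first
          | exact absurd hij (by decide)
          | exact Fin.mk_lt_mk.mpr h1
          | exact Fin.mk_lt_mk.mpr h2
          | exact Fin.mk_lt_mk.mpr (h1.trans h2)
    · intro i j
      fin_cases i <;> fin_cases j <;>
        (simp [permList]; try omega)

lemma noTriple {π : Equiv.Perm (Fin n)} (h : AvoidsPat π [3, 2, 1]) : NoTri π := by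
  intro p q r h1 h2 h3 h4
  exact h ((seqContains_iff π).mpr ⟨p, q, r, h1, h2, h3, h4⟩)

lemma aval_eq (π : Equiv.Perm (Fin n)) {j : ℕ} (hj : j < n) :
    aval π ⟨j, hj⟩ = (π ⟨j, hj⟩ : ℕ) + 1 - Nf π j := rfl

lemma infix_pathOf_iff (π : Equiv.Perm (Fin n)) :
    [true, true, false, true] <:+: pathOf π ↔
      ∃ i, ∃ h : i + 1 < n, 2 ≤ aval π ⟨i, by omega⟩ ∧ 1 ≤ aval π ⟨i + 1, h⟩ := by
  rw [pathOf_eq, infix_flatMap_blk]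
  constructor
  · rintro ⟨i, hi, h2, h1⟩
    rw [asP_length] at hi
    rw [asP_getD π (show i < n by omega)] at h2
    rw [asP_getD π hi] at h1
    exact ⟨i, hi, h2, h1⟩
  · rintro ⟨i, hi, h2, h1⟩
    refine ⟨i, by rw [asP_length]; exact hi, ?_, ?_⟩
    · rw [asP_getD π (show i < n by omega)]; exact h2
    · rw [asP_getD π hi]; exact h1

lemma not_fishburn_of (π : Equiv.Perm (Fin n)) {i : ℕ} (h1 : i + 1 < n)
    (h2 : 2 ≤ aval π ⟨i, by omega⟩) (h3 : 1 ≤ aval π ⟨i + 1, h1⟩) : ¬ IsFishburn π := by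
  intro hf
  have hin : i < n := by omega
  have hvi : (π ⟨i, hin⟩ : ℕ) < n := Fin.is_lt _
  rw [aval_eq] at h2 h3
  -- π(i) ≥ Nf i + 1, so π(i) ≥ 1
  have hNi : Nf π i + 1 ≤ (π ⟨i, hin⟩ : ℕ) := by omega
  have hNi1 : (π ⟨i, hin⟩ : ℕ) + 1 ≤ Nf π (i + 1) :=
    le_Nf π (i := ⟨i, hin⟩) (j := i + 1) (by simp)
  have hvsucc : (π ⟨i, hin⟩ : ℕ) < (π ⟨i + 1, h1⟩ : ℕ) := by omega
  have hvipos : 1 ≤ (π ⟨i, hin⟩ : ℕ) := by omega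
  set k : Fin n := π.symm ⟨(π ⟨i, hin⟩ : ℕ) - 1, by omega⟩ with hk
  have hπk : (π k : ℕ) = (π ⟨i, hin⟩ : ℕ) - 1 := by
    rw [hk, Equiv.apply_symm_apply]
  have hki : i < (k : ℕ) := by
    rcases Nat.lt_trichotomy (k : ℕ) i with hlt | heq | hgt
    · have := le_Nf π (i := k) (j := i) hlt
      omega
    · have : k = ⟨i, hin⟩ := Fin.ext heq
      rw [this] at hπk
      omega
    · exact hgt
  have := hf i (k : ℕ) hin (Fin.is_lt k) hki
    (by rw [Fin.eta]; omega)
  apply this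
  exact hvsucc

lemma exists_of_not_fishburn (π : Equiv.Perm (Fin n))
    (hNT : ∀ p q r : Fin n, p < q → q < r → (π q : ℕ) < (π p : ℕ) →
      (π r : ℕ) < (π q : ℕ) → False)
    (hnf : ¬ IsFishburn π) :
    ∃ i, ∃ h : i + 1 < n, 2 ≤ aval π ⟨i, by omega⟩ ∧ 1 ≤ aval π ⟨i + 1, h⟩ := by
  rw [IsFishburn] at hnf
  push_neg at hnf
  obtain ⟨i, k, hi, hk, hik, heq, hlt⟩ := hnf
  have hne : k ≠ i + 1 := by
    intro hcontra
    subst hcontra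
    have : (⟨i + 1, by omega⟩ : Fin n) = ⟨i + 1, hk⟩ := rfl
    rw [this] at hlt
    omega
  have hi1 : i + 1 < n := by omega
  -- earlier values are at most π(i) - 2
  have hsm : ∀ h : Fin n, (h : ℕ) < i → (π h : ℕ) + 1 ≤ (π ⟨i, hi⟩ : ℕ) - 1 := by
    intro h hh
    have hne1 : (π h : ℕ) ≠ (π ⟨i, hi⟩ : ℕ) := by
      intro hc
      have : h = ⟨i, hi⟩ := π.injective (Fin.ext hc)
      rw [this] at hh; simp at hh
    have hne2 : (π h : ℕ) ≠ (π ⟨k, hk⟩ : ℕ) := by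
      intro hc
      have : h = ⟨k, hk⟩ := π.injective (Fin.ext hc)
      rw [this] at hh; simp at hh; omega
    have hlt1 : (π h : ℕ) < (π ⟨i, hi⟩ : ℕ) := by
      rcases Nat.lt_or_ge (π h : ℕ) (π ⟨i, hi⟩ : ℕ) with hlt1 | hge
      · exact hlt1
      · exfalso
        exact hNT h ⟨i, hi⟩ ⟨k, hk⟩ hh (by simp [Fin.lt_def]; omega)
          (by omega) (by omega)
    omega
  have hNle : Nf π i ≤ (π ⟨i, hi⟩ : ℕ) - 1 := Nf_le π hsm
  have hNle2 : Nf π (i + 1) ≤ (π ⟨i + 1, hi1⟩ : ℕ) := by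
    apply Nf_le π
    intro h hh
    rcases Nat.lt_or_ge (h : ℕ) i with hlt' | hge
    · have := hsm h hlt'
      have h2 : (π ⟨i, hi⟩ : ℕ) < (π ⟨i + 1, hi1⟩ : ℕ) := by
        have : (⟨i + 1, by omega⟩ : Fin n) = ⟨i + 1, hi1⟩ := rfl
        rw [this] at hlt
        exact hlt
      omega
    · have : h = ⟨i, hi⟩ := Fin.ext (by simp only [Fin.val_mk]; omega)
      rw [this]
      have : (⟨i + 1, by omega⟩ : Fin n) = ⟨i + 1, hi1⟩ := rfl
      rw [this] at hlt
      omega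
  refine ⟨i, hi1, ?_, ?_⟩
  · show 2 ≤ aval π ⟨i, hi⟩
    rw [aval_eq]
    omega
  · show 1 ≤ aval π ⟨i + 1, hi1⟩
    rw [aval_eq]
    omega

lemma part1 (π : Equiv.Perm (Fin n)) (h321 : AvoidsPat π [3, 2, 1]) :
    IsFishburn π ↔ ¬ [true, true, false, true] <:+: pathOf π := by
  rw [infix_pathOf_iff]
  constructor
  · intro hf hex
    obtain ⟨i, h, h2, h3⟩ := hex
    exact not_fishburn_of π h h2 h3 hf
  · intro hni
    by_contra hnf
    exact hni (exists_of_not_fishburn π (noTriple h321) hnf)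

lemma blk_inj_aux : ∀ (a b : ℕ) (R₁ R₂ : List Bool),
    List.replicate a true ++ false :: R₁ = List.replicate b true ++ false :: R₂ →
      a = b ∧ R₁ = R₂ := by
  intro a
  induction a with
  | zero =>
    intro b R₁ R₂ h
    cases b with
    | zero => simpa using h
    | succ b => simp [List.replicate_succ] at h
  | succ a ih =>
    intro b R₁ R₂ h
    cases b with
    | zero => simp [List.replicate_succ] at h
    | succ b =>
      simp only [List.replicate_succ, List.cons_append, List.cons.injEq, true_and] at h
      obtain ⟨h1, h2⟩ := ih b R₁ R₂ h
      exact ⟨by omega, h2⟩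

lemma flatMap_blk_inj : ∀ (as bs : List ℕ), as.flatMap blk = bs.flatMap blk → as = bs := by
  intro as
  induction as with
  | nil =>
    intro bs h
    cases bs with
    | nil => rfl
    | cons b bs => exfalso; simp [blk] at h
  | cons a as ih =>
    intro bs h
    cases bs with
    | nil => exfalso; simp [blk] at h
    | cons b bs =>
      simp only [List.flatMap_cons] at h
      have h' : List.replicate a true ++ false :: as.flatMap blk =
          List.replicate b true ++ false :: bs.flatMap blk := by
        simpa [blk] using h
      obtain ⟨h1, h2⟩ := blk_inj_aux a b _ _ h'
      rw [h1, ih bs h2]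

lemma min_unused (π : Equiv.Perm (Fin n)) (hNT : NoTri π) {j : ℕ} (hj : j < n)
    (h0 : aval π ⟨j, hj⟩ = 0) {u : ℕ} (hu : u < (π ⟨j, hj⟩ : ℕ))
    (hunused : ∀ i : Fin n, (i : ℕ) < j → (π i : ℕ) ≠ u) : False := by
  rw [aval_eq] at h0
  have hvj : (π ⟨j, hj⟩ : ℕ) < n := Fin.is_lt _
  have hNge : (π ⟨j, hj⟩ : ℕ) + 1 ≤ Nf π j := by omega
  set k : Fin n := π.symm ⟨u, by omega⟩ with hk
  have hπk : (π k : ℕ) = u := by rw [hk, Equiv.apply_symm_apply]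
  have hkj : j < (k : ℕ) := by
    rcases Nat.lt_trichotomy (k : ℕ) j with hlt | heq | hgt
    · exact absurd hπk (hunused k hlt)
    · exfalso
      have : k = ⟨j, hj⟩ := Fin.ext heq
      rw [this] at hπk
      omega
    · exact hgt
  have hne : ((Finset.univ : Finset (Fin n)).filter fun i : Fin n => (i : ℕ) < j).Nonempty := by
    by_contra hcon
    rw [Finset.not_nonempty_iff_eq_empty] at hcon
    have : Nf π j = 0 := by rw [Nf, hcon]; simp
    omega
  obtain ⟨h, hmem, hsup⟩ := Finset.exists_mem_eq_sup _ hne (fun i : Fin n => (π i : ℕ) + 1)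
  have hhj : (h : ℕ) < j := by simpa using hmem
  have hNfh : Nf π j = (π h : ℕ) + 1 := hsup
  have hπh : (π ⟨j, hj⟩ : ℕ) < (π h : ℕ) := by
    have hne2 : (π h : ℕ) ≠ (π ⟨j, hj⟩ : ℕ) := by
      intro hc
      have : h = ⟨j, hj⟩ := π.injective (Fin.ext hc)
      rw [this] at hhj; simp at hhj
    omega
  exact hNT h ⟨j, hj⟩ k (by simpa [Fin.lt_def] using hhj) (by simpa [Fin.lt_def] using hkj)
    hπh (by omega)

lemma perm_eq_of_path_eq (π₁ π₂ : Equiv.Perm (Fin n)) (hNT₁ : NoTri π₁) (hNT₂ : NoTri π₂)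
    (hpath : pathOf π₁ = pathOf π₂) : π₁ = π₂ := by
  have hasp : asP π₁ = asP π₂ := by
    apply flatMap_blk_inj
    rw [← pathOf_eq, ← pathOf_eq, hpath]
  have haval : ∀ j (hj : j < n), aval π₁ ⟨j, hj⟩ = aval π₂ ⟨j, hj⟩ := by
    intro j hj
    rw [← asP_getD π₁ hj, ← asP_getD π₂ hj, hasp]
  have main : ∀ j, ∀ hj : j < n, (π₁ ⟨j, hj⟩ : ℕ) = (π₂ ⟨j, hj⟩ : ℕ) := by
    intro j
    induction j using Nat.strong_induction_on with
    | _ j IH =>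
      intro hj
      have hNf : Nf π₁ j = Nf π₂ j := by
        rw [Nf, Nf]
        apply Finset.sup_congr rfl
        intro i hi
        simp only [Finset.mem_filter, Finset.mem_univ, true_and] at hi
        have := IH (i : ℕ) hi (Fin.is_lt i)
        simp only [Fin.eta] at this
        rw [this]
      rcases Nat.eq_zero_or_pos (aval π₁ ⟨j, hj⟩) with h0 | hpos
      · have h0' : aval π₂ ⟨j, hj⟩ = 0 := by rw [← haval j hj]; exact h0
        by_contra hne
        rcases Nat.lt_or_ge (π₁ ⟨j, hj⟩ : ℕ) (π₂ ⟨j, hj⟩ : ℕ) with hlt | hge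
        · refine min_unused π₂ hNT₂ hj h0' hlt ?_
          intro i hi hc
          have hIH := IH (i : ℕ) hi (Fin.is_lt i)
          simp only [Fin.eta] at hIH
          rw [← hIH] at hc
          have : i = ⟨j, hj⟩ := π₁.injective (Fin.ext hc)
          rw [this] at hi; simp at hi
        · have hlt2 : (π₂ ⟨j, hj⟩ : ℕ) < (π₁ ⟨j, hj⟩ : ℕ) := by omega
          refine min_unused π₁ hNT₁ hj h0 hlt2 ?_
          intro i hi hc
          have hIH := IH (i : ℕ) hi (Fin.is_lt i)
          simp only [Fin.eta] at hIH
          rw [hIH] at hc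
          have : i = ⟨j, hj⟩ := π₂.injective (Fin.ext hc)
          rw [this] at hi; simp at hi
      · have h1 := aval_eq π₁ hj
        have h2 := aval_eq π₂ hj
        have h3 := haval j hj
        have hpos2 : 0 < aval π₂ ⟨j, hj⟩ := by omega
        omega
  apply Equiv.ext
  intro i
  apply Fin.ext
  have := main (i : ℕ) (Fin.is_lt i)
  simpa using this

lemma parse : ∀ (k : ℕ) (w : List Bool) (c : ℕ), w.count false = k →
    c + w.count true = w.count false →
    (∀ p, p <+: w → p.count false ≤ c + p.count true) →
    ∃ as : List ℕ, w = as.flatMap blk ∧ as.length = k ∧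
      ∀ j ≤ k, j ≤ c + (as.take j).sum := by
  intro k
  induction k with
  | zero =>
    intro w c hk hc hp
    have hct : w.count true = 0 := by omega
    have hw : w = [] := by
      have := count_tf w
      rw [hk, hct] at this
      exact List.length_eq_zero_iff.mp this.symm
    exact ⟨[], by simp [hw], by simp, by intro j hj; omega⟩
  | succ k ih =>
    intro w c hk hc hp
    set t := w.takeWhile (fun x => x == true) with ht
    set d := w.dropWhile (fun x => x == true) with hd
    have hw : w = t ++ d := List.takeWhile_append_dropWhile.symm
    have htrep : t = List.replicate t.length true := by
      apply List.eq_replicate_of_mem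
      intro x hx
      have := List.mem_takeWhile_imp (ht ▸ hx)
      simpa using this
    have hdne : d ≠ [] := by
      intro hcon
      rw [hcon, List.append_nil] at hw
      have : w.count false = 0 := by
        rw [hw, htrep]
        simp [List.count_replicate]
      omega
    have h0 : 0 < d.length := List.length_pos_iff.mpr hdne
    have hdne' : w.dropWhile (fun x => x == true) ≠ [] := by rw [← hd]; exact hdne
    have hdhead : d.head hdne = false := by
      have hnot := List.dropWhile_get_zero_not (p := fun x => x == true) w
        (by rw [← hd]; exact h0)
      rw [List.get_mk_zero] at hnot
      show (w.dropWhile (fun x => x == true)).head hdne' = false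
      simpa using hnot
    have hdeq : d = false :: d.tail := by
      conv_lhs => rw [← List.cons_head_tail hdne, hdhead]
    set w' := d.tail with hw'
    set a := t.length with ha
    have hweq : w = List.replicate a true ++ false :: w' := by
      rw [hw, hdeq, ← htrep]
    have hcf : w.count false = 1 + w'.count false := by
      rw [hweq]
      simp [List.count_replicate]
      omega
    have hct : w.count true = a + w'.count true := by
      rw [hweq]
      simp [List.count_replicate]
    have hca : 1 ≤ c + a := by
      have hpre : List.replicate a true ++ [false] <+: w := by
        rw [hweq]
        refine ⟨w', by simp⟩
      have := hp _ hpre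
      simpa [List.count_replicate] using this
    have hc' : (c + a - 1) + w'.count true = w'.count false := by omega
    have hp' : ∀ p, p <+: w' → p.count false ≤ (c + a - 1) + p.count true := by
      intro p hpp
      obtain ⟨s, hs⟩ := hpp
      have hpre : List.replicate a true ++ false :: p <+: w := by
        rw [hweq]
        exact ⟨s, by simp [← hs]⟩
      have := hp _ hpre
      simp [List.count_replicate] at this
      omega
    obtain ⟨as', heq', hlen', hsum'⟩ := ih w' (c + a - 1) (by omega) hc' hp'
    refine ⟨a :: as', ?_, by simp [hlen'], ?_⟩
    · rw [hweq, heq']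
      simp [blk]
    · intro j hj
      cases j with
      | zero => omega
      | succ j =>
        have := hsum' j (by omega)
        simp only [List.take_succ_cons, List.sum_cons]
        omega

noncomputable def vfun (as : List ℕ) : ℕ → ℕ
  | j =>
    if 1 ≤ as.getD j 0 then (as.take (j + 1)).sum - 1
    else sInf {u : ℕ | ∀ i, i < j → vfun as i ≠ u}
termination_by j => j
decreasing_by exact ‹_ < j›

lemma vfun_eq (as : List ℕ) (j : ℕ) :
    vfun as j = if 1 ≤ as.getD j 0 then (as.take (j + 1)).sum - 1
      else sInf {u : ℕ | ∀ i, i < j → vfun as i ≠ u} := by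
  rw [vfun]

lemma Aset_nonempty (as : List ℕ) (j : ℕ) :
    {u : ℕ | ∀ i, i < j → vfun as i ≠ u}.Nonempty := by
  refine ⟨(Finset.range j).sup (vfun as) + 1, ?_⟩
  intro i hi
  have := Finset.le_sup (f := vfun as) (Finset.mem_range.mpr hi)
  omega

lemma S_succ (as : List ℕ) {j : ℕ} (hj : j < as.length) :
    (as.take (j + 1)).sum = (as.take j).sum + as.getD j 0 := by
  rw [List.take_succ, List.sum_append,
    List.getElem?_eq_getElem hj, List.getD_eq_getElem _ _ hj]
  simp

lemma S_le_succ (as : List ℕ) (j : ℕ) : (as.take j).sum ≤ (as.take (j + 1)).sum := by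
  rw [List.take_succ, List.sum_append]
  omega

lemma S_mono (as : List ℕ) {j k : ℕ} (h : j ≤ k) : (as.take j).sum ≤ (as.take k).sum := by
  induction k with
  | zero => simp_all
  | succ k ih =>
    rcases Nat.lt_or_ge j (k + 1) with hlt | hge'
    · exact le_trans (ih (by omega)) (S_le_succ as k)
    · have : j = k + 1 := by omega
      simp [this]

lemma S_le_sum (as : List ℕ) (j : ℕ) : (as.take j).sum ≤ as.sum := by
  conv_rhs => rw [← List.take_append_drop j as]
  rw [List.sum_append]
  omega

/-- key bound: each constructed value is below the running partial sum -/
lemma vfun_lt_S (as : List ℕ) (hlen : as.length = n)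
    (hge : ∀ j ≤ n, j ≤ (as.take j).sum) {j : ℕ} (hj : j < n) :
    vfun as j < (as.take (j + 1)).sum := by
  rw [vfun_eq]
  split
  · have := hge (j + 1) (by omega)
    omega
  · rename_i hnot
    have h0 : as.getD j 0 = 0 := by omega
    have hS : (as.take (j + 1)).sum = (as.take j).sum := by
      rw [S_succ as (by omega)]
      omega
    have hjS : j < (as.take j).sum := by
      have := hge (j + 1) (by omega)
      omega
    have hcard : 1 ≤ ((Finset.range ((as.take j).sum)) \
        ((Finset.range j).image (vfun as))).card := by
      have h1 := Finset.le_card_sdiff ((Finset.range j).image (vfun as))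
        (Finset.range ((as.take j).sum))
      have h2 : ((Finset.range j).image (vfun as)).card ≤ j :=
        le_trans Finset.card_image_le (by simp)
      rw [Finset.card_range] at h1
      omega
    have hne2 : ((Finset.range ((as.take j).sum)) \
        ((Finset.range j).image (vfun as))).Nonempty := Finset.card_pos.mp (by omega)
    obtain ⟨u, hu⟩ := hne2
    rw [Finset.mem_sdiff, Finset.mem_range] at hu
    obtain ⟨huS, hunotim⟩ := hu
    have humem : u ∈ {u : ℕ | ∀ i, i < j → vfun as i ≠ u} := by
      intro i hi hc
      exact hunotim (Finset.mem_image.mpr ⟨i, Finset.mem_range.mpr hi, hc⟩)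
    have := Nat.sInf_le humem
    omega

lemma vfun_lt_n (as : List ℕ) (hlen : as.length = n)
    (hge : ∀ j ≤ n, j ≤ (as.take j).sum) (hsum : as.sum = n) {j : ℕ} (hj : j < n) :
    vfun as j < n :=
  lt_of_lt_of_le (vfun_lt_S as hlen hge hj) (hsum ▸ S_le_sum as (j + 1))

lemma vfun_inj (as : List ℕ) (hlen : as.length = n)
    (hge : ∀ j ≤ n, j ≤ (as.take j).sum) {i j : ℕ} (hij : i < j) (hj : j < n) :
    vfun as i ≠ vfun as j := by
  rw [vfun_eq as j]
  split
  · rename_i hpos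
    have hvi : vfun as i < (as.take (i + 1)).sum := vfun_lt_S as hlen hge (by omega)
    have h1 : (as.take (i + 1)).sum ≤ (as.take j).sum := S_mono as (by omega)
    have h2 := S_succ as (j := j) (by omega)
    omega
  · intro hcon
    have hmem := Nat.sInf_mem (Aset_nonempty as j)
    exact hmem i hij hcon

/-- the permutation constructed from a block list -/
noncomputable def buildPerm (as : List ℕ) (hlen : as.length = n)
    (hge : ∀ j ≤ n, j ≤ (as.take j).sum) (hsum : as.sum = n) : Equiv.Perm (Fin n) :=
  Equiv.ofBijective (fun i : Fin n => (⟨vfun as (i : ℕ),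
      vfun_lt_n as hlen hge hsum i.is_lt⟩ : Fin n))
    (Finite.injective_iff_bijective.mp (by
      intro i j hij
      simp only [Fin.mk.injEq] at hij
      by_contra hne
      rcases Nat.lt_trichotomy (i : ℕ) (j : ℕ) with h | h | h
      · exact vfun_inj as hlen hge h j.is_lt hij
      · exact hne (Fin.ext h)
      · exact vfun_inj as hlen hge h i.is_lt hij.symm))

variable (as : List ℕ) (hlen : as.length = n)
  (hge : ∀ j ≤ n, j ≤ (as.take j).sum) (hsum : as.sum = n)

lemma buildPerm_apply (i : Fin n) :
    (buildPerm as hlen hge hsum i : ℕ) = vfun as (i : ℕ) := rfl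

lemma buildPerm_Nf : ∀ j ≤ n, Nf (buildPerm as hlen hge hsum) j = (as.take j).sum := by
  intro j hj
  induction j with
  | zero => rw [Nf_zero]; simp
  | succ j ih =>
    have hjn : j < n := hj
    have hval : ((buildPerm as hlen hge hsum) ⟨j, hjn⟩ : ℕ) = vfun as j := rfl
    rw [Nf_succ _ hjn, ih (by omega), hval]
    have hSs := S_succ as (j := j) (by omega)
    rcases Nat.eq_zero_or_pos (as.getD j 0) with h0 | hpos
    · have := vfun_lt_S as hlen hge hjn
      omega
    · have hv : vfun as j = (as.take (j + 1)).sum - 1 := by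
        rw [vfun_eq, if_pos (by omega)]
      have := hge (j + 1) (by omega)
      omega

lemma buildPerm_aval {j : ℕ} (hj : j < n) :
    aval (buildPerm as hlen hge hsum) ⟨j, hj⟩ = as.getD j 0 := by
  rw [aval_eq _ hj, buildPerm_Nf as hlen hge hsum j (by omega)]
  have hval : ((buildPerm as hlen hge hsum) ⟨j, hj⟩ : ℕ) = vfun as j :=
    buildPerm_apply as hlen hge hsum ⟨j, hj⟩
  rw [hval]
  have hSs := S_succ as (j := j) (by omega)
  rcases Nat.eq_zero_or_pos (as.getD j 0) with h0 | hpos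
  · have := vfun_lt_S as hlen hge hj
    omega
  · have hv : vfun as j = (as.take (j + 1)).sum - 1 := by
      rw [vfun_eq, if_pos (by omega)]
    have := hge (j + 1) (by omega)
    omega

lemma buildPerm_path : pathOf (buildPerm as hlen hge hsum) = as.flatMap blk := by
  rw [pathOf_eq]
  congr 1
  apply List.ext_getElem
  · simp [asP, hlen]
  · intro j h1 h2
    have hjn : j < n := by simpa [asP] using h1
    rw [asP_getElem _ hjn, buildPerm_aval as hlen hge hsum hjn,
      List.getD_eq_getElem _ _ (by omega)]

lemma buildPerm_noTri : NoTri (buildPerm as hlen hge hsum) := by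
  intro p q r hpq0 hqr0 h10 h20
  have hpq : (p : ℕ) < (q : ℕ) := hpq0
  have hqr : (q : ℕ) < (r : ℕ) := hqr0
  have h1 : vfun as (q : ℕ) < vfun as (p : ℕ) := h10
  have h2 : vfun as (r : ℕ) < vfun as (q : ℕ) := h20
  have hq0 : as.getD (q : ℕ) 0 = 0 := by
    by_contra hpos
    have hv : vfun as (q : ℕ) = (as.take ((q : ℕ) + 1)).sum - 1 := by
      rw [vfun_eq, if_pos (by omega)]
    have hp3 : vfun as (p : ℕ) < (as.take ((p : ℕ) + 1)).sum :=
      vfun_lt_S as hlen hge (by omega)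
    have hmono : (as.take ((p : ℕ) + 1)).sum ≤ (as.take (q : ℕ)).sum := S_mono as hpq
    have hSs := S_succ as (j := (q : ℕ)) (by omega)
    have hge1 := hge ((q : ℕ) + 1) (by omega)
    omega
  have hr0 : as.getD (r : ℕ) 0 = 0 := by
    by_contra hpos
    have hv : vfun as (r : ℕ) = (as.take ((r : ℕ) + 1)).sum - 1 := by
      rw [vfun_eq, if_pos (by omega)]
    have hp3 : vfun as (q : ℕ) < (as.take ((q : ℕ) + 1)).sum :=
      vfun_lt_S as hlen hge (by omega)
    have hmono : (as.take ((q : ℕ) + 1)).sum ≤ (as.take (r : ℕ)).sum := S_mono as hqr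
    have hSs := S_succ as (j := (r : ℕ)) (by omega)
    have hge1 := hge ((r : ℕ) + 1) (by omega)
    omega
  have hvq : vfun as (q : ℕ) = sInf {u : ℕ | ∀ i, i < (q : ℕ) → vfun as i ≠ u} := by
    rw [vfun_eq, if_neg (by omega)]
  have hvr : vfun as (r : ℕ) = sInf {u : ℕ | ∀ i, i < (r : ℕ) → vfun as i ≠ u} := by
    rw [vfun_eq, if_neg (by omega)]
  have hrmem := Nat.sInf_mem (Aset_nonempty as (r : ℕ))
  rw [← hvr] at hrmem
  have hrq : vfun as (q : ℕ) ≠ vfun as (r : ℕ) := hrmem (q : ℕ) hqr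
  have hrAq : vfun as (r : ℕ) ∈ {u : ℕ | ∀ i, i < (q : ℕ) → vfun as i ≠ u} := by
    intro i hi
    exact hrmem i (by omega)
  have hle : vfun as (q : ℕ) ≤ vfun as (r : ℕ) := by
    rw [hvq]
    exact Nat.sInf_le hrAq
  omega


lemma surj (w : List Bool) (hD : IsDyckWord n w) :
    ∃ π : Equiv.Perm (Fin n), AvoidsPat π [3, 2, 1] ∧ pathOf π = w := by
  obtain ⟨hlen2, hct, hpre⟩ := hD
  have hcf : w.count false = n := by
    have := count_tf w
    omega
  obtain ⟨as, hweq, haslen, hsums⟩ := parse n w 0 hcf (by omega)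
    (by intro p hp; simpa using hpre p hp)
  have hge : ∀ j ≤ n, j ≤ (as.take j).sum := by
    intro j hj
    have := hsums j hj
    omega
  have hsum : as.sum = n := by
    rw [hweq, flatMap_count_true] at hct
    exact hct
  refine ⟨buildPerm as haslen hge hsum, ?_, ?_⟩
  · intro hseq
    rw [seqContains_iff] at hseq
    obtain ⟨p, q, r, h1, h2, h3, h4⟩ := hseq
    exact buildPerm_noTri as haslen hge hsum p q r h1 h2 h3 h4
  · rw [buildPerm_path, hweq]

end Stmt8

theorem stmt8 (n : ℕ) :
    (∀ π : Equiv.Perm (Fin n), AvoidsPat π [3, 2, 1] →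
      (IsFishburn π ↔ ¬ [true, true, false, true] <:+: pathOf π)) ∧
    Nat.card {π : Equiv.Perm (Fin n) // IsFishburn π ∧ AvoidsPat π [3, 2, 1]} =
      Nat.card {w : List Bool // IsDyckWord n w ∧ ¬ [true, true, false, true] <:+: w} := by
  constructor
  · exact fun π h => Stmt8.part1 π h
  · have hbij : Function.Bijective
        (fun x : {π : Equiv.Perm (Fin n) // IsFishburn π ∧ AvoidsPat π [3, 2, 1]} =>
          (⟨pathOf x.1, Stmt8.pathOf_isDyckWord x.1, (Stmt8.part1 x.1 x.2.2).mp x.2.1⟩ :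
            {w : List Bool // IsDyckWord n w ∧ ¬ [true, true, false, true] <:+: w})) := by
      constructor
      · rintro ⟨π₁, hf₁, ha₁⟩ ⟨π₂, hf₂, ha₂⟩ h
        simp only [Subtype.mk.injEq] at h
        exact Subtype.ext (Stmt8.perm_eq_of_path_eq π₁ π₂ (Stmt8.noTriple ha₁)
          (Stmt8.noTriple ha₂) h)
      · rintro ⟨w, hDy, hA⟩
        obtain ⟨π, h321, hpath⟩ := Stmt8.surj w hDy
        have hfish : IsFishburn π := (Stmt8.part1 π h321).mpr (by rw [hpath]; exact hA)
        exact ⟨⟨π, hfish, h321⟩, Subtype.ext hpath⟩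
    exact Nat.card_eq_of_bijective _ hbij
end
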